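/- arXiv:2211.12995 — 5 statements merged into one kernel-verified Lean document; each statement's English description precedes it below -/
import Mathlib

section
/- For every positive integer n, the identity D_n(u^{−1}, v^{−1}) = v^{n−1} · D_n(u, v) holds in the field of rational functions ℚ(u,v). -/
open Finset ArithmeticFunction

/-- The rational functions `D_n(u,v)` from the paper, defined by `D_1 = 1` and the recursion
`D_n(u,v) = (u^(n-1) - v^(n-1))⁻¹ * Σ_{1 ≠ d ∣ n} v^(n/d - 1) (Σ_{e ∣ d} μ(d/e) u^(e-1)) D_{n/d}(u^d, v)`. -/
noncomputable def Dfun {K : Type*} [Field K] : ℕ → K → K → K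
  | 0, _, _ => 1
  | 1, _, _ => 1
  | (n+2), u, v =>
    (u ^ (n+1) - v ^ (n+1))⁻¹ *
      ∑ d ∈ ((n+2 : ℕ).divisors.erase 1).attach,
        v ^ ((n+2) / d.1 - 1) *
          (∑ e ∈ (d.1).divisors, ((moebius (d.1 / e) : ℤ) : K) * u ^ (e - 1)) *
          Dfun ((n+2) / d.1) (u ^ d.1) v
  termination_by n => n
  decreasing_by
    have hd := d.2
    rw [Finset.mem_erase, Nat.mem_divisors] at hd
    have h0 : 0 < d.1 := Nat.pos_of_ne_zero (fun h => by simp [h] at hd)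
    exact Nat.div_lt_self (by omega) (by omega)


namespace Statement3Aux

/-- Reindexing a double divisor sum: pairs `(d, e)` with `e ∣ d ∣ n` correspond to pairs
`(e, c)` with `e ∣ n`, `c ∣ n / e` via `d = e * c`. -/
lemma RX {M : Type*} [AddCommMonoid M] (n : ℕ) (g : ℕ → ℕ → M) :
    ∑ d ∈ n.divisors, ∑ e ∈ d.divisors, g d e
      = ∑ e ∈ n.divisors, ∑ c ∈ (n / e).divisors, g (e * c) e := by
  rw [Finset.sum_sigma' n.divisors (fun d => d.divisors) (fun d e => g d e),
      Finset.sum_sigma' n.divisors (fun e => (n / e).divisors) (fun e c => g (e * c) e)]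
  refine Finset.sum_nbij' (i := fun p => ⟨p.2, p.1 / p.2⟩) (j := fun p => ⟨p.1 * p.2, p.1⟩)
    ?_ ?_ ?_ ?_ ?_
  · rintro ⟨d, e⟩ hp
    simp only [Finset.mem_sigma, Nat.mem_divisors] at hp ⊢
    obtain ⟨⟨hdn, hn0⟩, ⟨hed, hd0⟩⟩ := hp
    have he0 : e ≠ 0 := fun h => hd0 (Nat.eq_zero_of_zero_dvd (h ▸ hed))
    have hen : e ∣ n := hed.trans hdn
    refine ⟨⟨hen, hn0⟩, ?_, ?_⟩
    · obtain ⟨k, rfl⟩ := hed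
      obtain ⟨l, rfl⟩ := hdn
      rw [Nat.mul_div_cancel_left _ (Nat.pos_of_ne_zero he0),
          Nat.mul_assoc, Nat.mul_div_cancel_left _ (Nat.pos_of_ne_zero he0)]
      exact Dvd.intro l rfl
    · exact (Nat.div_pos (Nat.le_of_dvd (Nat.pos_of_ne_zero hn0) hen)
        (Nat.pos_of_ne_zero he0)).ne'
  · rintro ⟨e, c⟩ hp
    simp only [Finset.mem_sigma, Nat.mem_divisors] at hp ⊢
    obtain ⟨⟨hen, hn0⟩, ⟨hc, h0⟩⟩ := hp
    have he0 : e ≠ 0 := fun h => hn0 (Nat.eq_zero_of_zero_dvd (h ▸ hen))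
    have hc0 : c ≠ 0 := fun h => h0 (Nat.eq_zero_of_zero_dvd (h ▸ hc))
    refine ⟨⟨?_, hn0⟩, Dvd.intro c rfl, by positivity⟩
    obtain ⟨k, rfl⟩ := hen
    rw [Nat.mul_div_cancel_left _ (Nat.pos_of_ne_zero he0)] at hc
    exact Nat.mul_dvd_mul_left e hc
  · rintro ⟨d, e⟩ hp
    simp only [Finset.mem_sigma, Nat.mem_divisors] at hp
    obtain ⟨⟨hdn, hn0⟩, ⟨hed, hd0⟩⟩ := hp
    simp [Nat.mul_div_cancel' hed]
  · rintro ⟨e, c⟩ hp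
    simp only [Finset.mem_sigma, Nat.mem_divisors] at hp
    obtain ⟨⟨hen, hn0⟩, _, _⟩ := hp
    have he0 : e ≠ 0 := fun h => hn0 (Nat.eq_zero_of_zero_dvd (h ▸ hen))
    simp [Nat.mul_div_cancel_left _ (Nat.pos_of_ne_zero he0)]
  · rintro ⟨d, e⟩ hp
    simp only [Finset.mem_sigma, Nat.mem_divisors] at hp
    obtain ⟨⟨hdn, hn0⟩, ⟨hed, hd0⟩⟩ := hp
    simp [Nat.mul_div_cancel' hed]

lemma DS {M : Type*} [AddCommMonoid M] (n : ℕ) (f : ℕ → ℕ → M) :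
    ∑ d ∈ n.divisors, ∑ e ∈ (n / d).divisors, f d e
      = ∑ k ∈ n.divisors, ∑ d ∈ k.divisors, f d (k / d) := by
  rw [RX n (fun k d => f d (k / d))]
  refine Finset.sum_congr rfl fun e he => Finset.sum_congr rfl fun c hc => ?_
  have he0 : e ≠ 0 := (Nat.pos_of_mem_divisors he).ne'
  rw [Nat.mul_div_cancel_left _ (Nat.pos_of_ne_zero he0)]

noncomputable def Sfn {K : Type*} [Field K] (d : ℕ) (u : K) : K :=
  ∑ e ∈ d.divisors, ((moebius (d / e) : ℤ) : K) * u ^ (e - 1)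

noncomputable def Wfn {K : Type*} [Field K] (v : K) (m : ℕ) (y : K) : K :=
  ∑ c ∈ m.divisors, ((moebius c : ℤ) : K) * Dfun (m / c) (y ^ c) v

noncomputable def Tfn {K : Type*} [Field K] (v : K) (m : ℕ) (y : K) : K :=
  ∑ e ∈ m.divisors, (y ^ e) ^ (m / e - 1) * Wfn v (m / e) (y ^ e)

variable {K : Type*} [Field K]

lemma musum (m : ℕ) :
    (∑ c ∈ m.divisors, ((moebius c : ℤ) : K)) = if m = 1 then 1 else 0 := by
  have h : (∑ c ∈ m.divisors, moebius c) = if m = 1 then 1 else 0 := by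
    rw [← coe_mul_zeta_apply, moebius_mul_coe_zeta, one_apply]
  rw [← Int.cast_sum, h]
  split_ifs <;> simp

lemma Sfn_one (u : K) : Sfn 1 u = 1 := by simp [Sfn, Nat.divisors_one]

lemma expo (k n : ℕ) (hk : k ∣ n) (hn : n ≠ 0) : k * (n / k - 1) = n - k := by
  have hk0 : k ≠ 0 := fun h => hn (Nat.eq_zero_of_zero_dvd (h ▸ hk))
  have h := Nat.mul_div_cancel' hk
  obtain ⟨q, hq⟩ : ∃ q, n / k = q + 1 :=
    ⟨n / k - 1, by
      have := Nat.div_pos (Nat.le_of_dvd (Nat.pos_of_ne_zero hn) hk) (Nat.pos_of_ne_zero hk0)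
      omega⟩
  rw [hq, Nat.add_sub_cancel, ← h, hq, Nat.mul_succ, Nat.add_sub_cancel]

lemma sum_Sfn (k : ℕ) (hk : k ≠ 0) (x : K) :
    ∑ d ∈ k.divisors, Sfn d x = x ^ (k - 1) := by
  rw [show (∑ d ∈ k.divisors, Sfn d x)
      = ∑ d ∈ k.divisors, ∑ e ∈ d.divisors, ((moebius (d / e) : ℤ) : K) * x ^ (e - 1) from rfl,
    RX k (fun d e => ((moebius (d / e) : ℤ) : K) * x ^ (e - 1))]
  have : ∀ e ∈ k.divisors,
      (∑ c ∈ (k / e).divisors, ((moebius ((e * c) / e) : ℤ) : K) * x ^ (e - 1))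
        = (if k / e = 1 then 1 else 0) * x ^ (e - 1) := by
    intro e he
    have he0 : 0 < e := Nat.pos_of_mem_divisors he
    rw [← Finset.sum_mul, ← musum (k / e)]
    congr 1
    exact Finset.sum_congr rfl fun c _ => by rw [Nat.mul_div_cancel_left _ he0]
  rw [Finset.sum_congr rfl this]
  rw [Finset.sum_eq_single_of_mem k (Nat.mem_divisors_self k hk)]
  · simp [Nat.div_self (Nat.pos_of_ne_zero hk)]
  · intro e he hne
    have hed : e ∣ k := (Nat.mem_divisors.mp he).1
    have : k / e ≠ 1 := by
      intro h
      apply hne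
      have := Nat.div_mul_cancel hed
      rw [h, one_mul] at this
      omega
    simp [this]

lemma Dfun_one (u v : K) : Dfun 1 u v = 1 := by rw [Dfun]

lemma Dfun_rec (n : ℕ) (hn : 2 ≤ n) (u v : K) :
    Dfun n u v = (u ^ (n-1) - v ^ (n-1))⁻¹ *
      ∑ d ∈ (n.divisors.erase 1),
        v ^ (n / d - 1) * Sfn d u * Dfun (n / d) (u ^ d) v := by
  obtain ⟨m, rfl⟩ : ∃ m, n = m + 2 := ⟨n - 2, by omega⟩
  rw [Dfun, ← Finset.sum_attach (((m+2:ℕ)).divisors.erase 1)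
    (fun d => v ^ ((m+2) / d - 1) * Sfn d u * Dfun ((m+2) / d) (u ^ d) v)]
  rfl

lemma star (v : K) (n : ℕ) (hn : n ≠ 0) (x : K)
    (hx : ∀ a b : ℕ, 0 < a → 0 < b → x ^ a ≠ v ^ b) :
    x ^ (n-1) * Dfun n x v
      = ∑ d ∈ n.divisors, v ^ (n/d - 1) * Sfn d x * Dfun (n/d) (x^d) v := by
  rcases Nat.lt_or_ge n 2 with h1 | hn2
  · have : n = 1 := by omega
    subst this
    simp [Nat.divisors_one, Sfn_one, Dfun_one]
  · have hsub : x ^ (n-1) - v ^ (n-1) ≠ 0 :=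
      sub_ne_zero.mpr (hx (n-1) (n-1) (by omega) (by omega))
    have herase : (∑ d ∈ n.divisors.erase 1,
        v ^ (n/d - 1) * Sfn d x * Dfun (n/d) (x ^ d) v)
        = (x ^ (n-1) - v ^ (n-1)) * Dfun n x v := by
      rw [Dfun_rec n hn2 x v]
      field_simp
    rw [← Finset.sum_erase_add _ _ (Nat.one_mem_divisors.mpr hn), herase]
    simp only [Nat.div_one, pow_one, Sfn_one]
    ring

lemma Wsum (v : K) (n : ℕ) (hn : n ≠ 0) (x : K) :
    ∑ k ∈ n.divisors, Wfn v (n / k) (x ^ k) = Dfun n x v := by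
  have step1 : ∑ k ∈ n.divisors, Wfn v (n / k) (x ^ k)
      = ∑ k ∈ n.divisors, ∑ c ∈ (n / k).divisors,
          ((moebius c : ℤ) : K) * Dfun (n / (k * c)) (x ^ (k * c)) v := by
    refine Finset.sum_congr rfl fun k hk => Finset.sum_congr rfl fun c hc => ?_
    rw [← pow_mul, Nat.div_div_eq_div_mul]
  rw [step1, DS n (fun k c => ((moebius c : ℤ) : K) * Dfun (n / (k * c)) (x ^ (k * c)) v)]
  have step2 : ∀ m ∈ n.divisors,
      (∑ d ∈ m.divisors,
          ((moebius (m / d) : ℤ) : K) * Dfun (n / (d * (m / d))) (x ^ (d * (m / d))) v)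
      = (if m = 1 then 1 else 0) * Dfun (n / m) (x ^ m) v := by
    intro m hm
    have h1 : ∀ d ∈ m.divisors,
        ((moebius (m / d) : ℤ) : K) * Dfun (n / (d * (m / d))) (x ^ (d * (m / d))) v
        = ((moebius (m / d) : ℤ) : K) * Dfun (n / m) (x ^ m) v := by
      intro d hd
      rw [Nat.mul_div_cancel' (Nat.mem_divisors.mp hd).1]
    rw [Finset.sum_congr rfl h1, ← Finset.sum_mul,
      Nat.sum_div_divisors m (fun d => ((moebius d : ℤ) : K)), musum m]
  rw [Finset.sum_congr rfl step2,
    Finset.sum_eq_single_of_mem 1 (Nat.one_mem_divisors.mpr hn)]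
  · simp
  · intro m _ hm1
    simp [hm1]

lemma Ylem (v : K) (n : ℕ) (hn : n ≠ 0) (x : K) :
    ∑ d ∈ n.divisors, Sfn d x * Tfn v (n / d) (x ^ d) = x ^ (n-1) * Dfun n x v := by
  have step1 : ∑ d ∈ n.divisors, Sfn d x * Tfn v (n / d) (x ^ d)
      = ∑ d ∈ n.divisors, ∑ e ∈ (n / d).divisors,
          Sfn d x * ((x ^ (d * e)) ^ (n / (d * e) - 1) * Wfn v (n / (d * e)) (x ^ (d * e))) := by
    refine Finset.sum_congr rfl fun d hd => ?_
    rw [Tfn, Finset.mul_sum]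
    refine Finset.sum_congr rfl fun e he => ?_
    rw [Nat.div_div_eq_div_mul, show (x ^ d) ^ e = x ^ (d * e) from (pow_mul x d e).symm]
  rw [step1, DS n (fun d e => Sfn d x *
      ((x ^ (d * e)) ^ (n / (d * e) - 1) * Wfn v (n / (d * e)) (x ^ (d * e))))]
  have step2 : ∀ k ∈ n.divisors,
      (∑ d ∈ k.divisors, Sfn d x *
        ((x ^ (d * (k / d))) ^ (n / (d * (k / d)) - 1)
          * Wfn v (n / (d * (k / d))) (x ^ (d * (k / d)))))
      = x ^ (n - 1) * Wfn v (n / k) (x ^ k) := by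
    intro k hk
    obtain ⟨hkdvd, hn0⟩ := Nat.mem_divisors.mp hk
    have hk0 : k ≠ 0 := fun h => hn0 (Nat.eq_zero_of_zero_dvd (h ▸ hkdvd))
    have h1 : ∀ d ∈ k.divisors, Sfn d x *
        ((x ^ (d * (k / d))) ^ (n / (d * (k / d)) - 1)
          * Wfn v (n / (d * (k / d))) (x ^ (d * (k / d))))
        = Sfn d x * ((x ^ k) ^ (n / k - 1) * Wfn v (n / k) (x ^ k)) := by
      intro d hd
      rw [Nat.mul_div_cancel' (Nat.mem_divisors.mp hd).1]
    rw [Finset.sum_congr rfl h1, ← Finset.sum_mul, sum_Sfn k hk0 x, ← mul_assoc, ← pow_mul,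
      expo k n hkdvd hn, ← pow_add]
    congr 2
    have : k ≤ n := Nat.le_of_dvd (Nat.pos_of_ne_zero hn) hkdvd
    have : 1 ≤ k := Nat.pos_of_ne_zero hk0
    omega
  rw [Finset.sum_congr rfl step2, ← Finset.mul_sum, Wsum v n hn x]

lemma pow_good (v x : K) (hx : ∀ a b : ℕ, 0 < a → 0 < b → x ^ a ≠ v ^ b) (d : ℕ) (hd : 0 < d) :
    ∀ a b : ℕ, 0 < a → 0 < b → (x ^ d) ^ a ≠ v ^ b := by
  intro a b ha hb
  rw [← pow_mul]
  exact hx (d * a) b (by positivity) hb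

lemma erase_facts {n d : ℕ} (hn : n ≠ 0) (hd : d ∈ n.divisors.erase 1) :
    d ∣ n ∧ 2 ≤ d ∧ n / d < n ∧ n / d ≠ 0 := by
  rw [Finset.mem_erase, Nat.mem_divisors] at hd
  obtain ⟨hd1, hdvd, _⟩ := hd
  have hd0 : d ≠ 0 := fun h => hn (Nat.eq_zero_of_zero_dvd (h ▸ hdvd))
  have h2 : 2 ≤ d := by omega
  exact ⟨hdvd, h2, Nat.div_lt_self (Nat.pos_of_ne_zero hn) (by omega),
    (Nat.div_pos (Nat.le_of_dvd (Nat.pos_of_ne_zero hn) hdvd) (by omega)).ne'⟩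

lemma ddag (v : K) : ∀ n : ℕ, n ≠ 0 → ∀ x : K, x ≠ 0 →
    (∀ a b : ℕ, 0 < a → 0 < b → x ^ a ≠ v ^ b) →
    Tfn v n x = v ^ (n-1) * Dfun n x v := by
  intro n
  induction n using Nat.strong_induction_on with
  | _ n IH =>
    intro hn x hx0 hx
    have hstar := star v n hn x hx
    have hsplit := Finset.sum_erase_add n.divisors
      (fun d => v ^ (n/d - 1) * Sfn d x * Dfun (n/d) (x^d) v) (Nat.one_mem_divisors.mpr hn)
    have hIH : ∀ d ∈ n.divisors.erase 1,
        v ^ (n/d - 1) * Sfn d x * Dfun (n/d) (x^d) v = Sfn d x * Tfn v (n/d) (x^d) := by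
      intro d hd
      obtain ⟨hdvd, hd2, hlt, hnd0⟩ := erase_facts hn hd
      rw [IH (n/d) hlt hnd0 (x^d) (pow_ne_zero d hx0) (pow_good v x hx d (by omega))]
      ring
    have hYe := Ylem v n hn x
    have hsplitY := Finset.sum_erase_add n.divisors
      (fun d => Sfn d x * Tfn v (n/d) (x^d)) (Nat.one_mem_divisors.mpr hn)
    simp only [Nat.div_one, pow_one, Sfn_one, one_mul, mul_one] at hsplit hsplitY
    rw [Finset.sum_congr rfl hIH] at hsplit
    rw [hYe] at hsplitY
    rw [← hstar] at hsplit
    linear_combination hsplitY - hsplit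

lemma FullX (v : K) (n : ℕ) (hn : n ≠ 0) (x : K) (hx0 : x ≠ 0)
    (hx : ∀ a b : ℕ, 0 < a → 0 < b → x ^ a ≠ v ^ b) :
    ∑ d ∈ n.divisors, x ^ (n-1) * Sfn d x⁻¹ * Dfun (n/d) (x^d) v
      = v ^ (n-1) * Dfun n x v := by
  have step1 : ∀ d ∈ n.divisors, x ^ (n-1) * Sfn d x⁻¹ * Dfun (n/d) (x^d) v
      = ∑ e ∈ d.divisors, ((moebius (d/e) : ℤ) : K) * x ^ (n-e) * Dfun (n/d) (x^d) v := by
    intro d hd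
    obtain ⟨hdvd, hn0⟩ := Nat.mem_divisors.mp hd
    rw [Sfn, Finset.mul_sum, Finset.sum_mul]
    refine Finset.sum_congr rfl fun e he => ?_
    obtain ⟨hedvd, hd0⟩ := Nat.mem_divisors.mp he
    have hen : e ≤ n := Nat.le_of_dvd (Nat.pos_of_ne_zero hn) (hedvd.trans hdvd)
    have he1 : 1 ≤ e := Nat.pos_of_ne_zero (fun h => hd0 (Nat.eq_zero_of_zero_dvd (h ▸ hedvd)))
    have hxe : x ^ (n-1) * (x⁻¹) ^ (e-1) = x ^ (n-e) := by
      rw [inv_pow, show n - 1 = (n - e) + (e - 1) by omega, pow_add,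
        mul_assoc, mul_inv_cancel₀ (pow_ne_zero _ hx0), mul_one]
    calc x ^ (n-1) * (((moebius (d/e) : ℤ) : K) * x⁻¹ ^ (e-1)) * Dfun (n/d) (x^d) v
        = ((moebius (d/e) : ℤ) : K) * (x ^ (n-1) * (x⁻¹) ^ (e-1)) * Dfun (n/d) (x^d) v := by
          ring
      _ = ((moebius (d/e) : ℤ) : K) * x ^ (n-e) * Dfun (n/d) (x^d) v := by rw [hxe]
  rw [Finset.sum_congr rfl step1,
    RX n (fun d e => ((moebius (d/e) : ℤ) : K) * x ^ (n-e) * Dfun (n/d) (x^d) v)]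
  have step2 : ∀ e ∈ n.divisors,
      (∑ c ∈ (n/e).divisors,
          ((moebius ((e*c)/e) : ℤ) : K) * x ^ (n-e) * Dfun (n/(e*c)) (x^(e*c)) v)
      = (x ^ e) ^ (n/e - 1) * Wfn v (n/e) (x^e) := by
    intro e he
    obtain ⟨hedvd, hn0⟩ := Nat.mem_divisors.mp he
    have he0 : 0 < e := Nat.pos_of_mem_divisors he
    have hxne : x ^ (n - e) = (x ^ e) ^ (n/e - 1) := by
      rw [← pow_mul, expo e n hedvd hn]
    rw [Wfn, Finset.mul_sum]
    refine Finset.sum_congr rfl fun c hc => ?_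
    rw [Nat.mul_div_cancel_left _ he0, hxne, Nat.div_div_eq_div_mul,
      show (x ^ e) ^ c = x ^ (e * c) from (pow_mul x e c).symm]
    ring
  rw [Finset.sum_congr rfl step2]
  exact ddag v n hn x hx0 hx

lemma symm_main (v : K) (hv : v ≠ 0) : ∀ n : ℕ, n ≠ 0 → ∀ x : K, x ≠ 0 →
    (∀ a b : ℕ, 0 < a → 0 < b → x ^ a ≠ v ^ b) →
    Dfun n x⁻¹ v⁻¹ = v ^ (n-1) * Dfun n x v := by
  intro n
  induction n using Nat.strong_induction_on with
  | _ n IH =>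
    intro hn x hx0 hx
    rcases Nat.lt_or_ge n 2 with h1 | hn2
    · have : n = 1 := by omega
      subst this
      rw [Dfun_one, Dfun_one]
      simp
    · rw [Dfun_rec n hn2 x⁻¹ v⁻¹]
      have hterm : ∀ d ∈ n.divisors.erase 1,
          (v⁻¹) ^ (n/d - 1) * Sfn d x⁻¹ * Dfun (n/d) ((x⁻¹)^d) (v⁻¹)
          = Sfn d x⁻¹ * Dfun (n/d) (x^d) v := by
        intro d hd
        obtain ⟨hdvd, hd2, hlt, hnd0⟩ := erase_facts hn hd
        rw [inv_pow x d,
          IH (n/d) hlt hnd0 (x^d) (pow_ne_zero d hx0) (pow_good v x hx d (by omega))]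
        have hvk : (v⁻¹ : K) ^ (n/d - 1) * v ^ (n/d - 1) = 1 := by
          rw [inv_pow, inv_mul_cancel₀ (pow_ne_zero _ hv)]
        linear_combination (Sfn d x⁻¹ * Dfun (n/d) (x^d) v) * hvk
      rw [Finset.sum_congr rfl hterm]
      have hfull := FullX v n hn x hx0 hx
      have hsplit := Finset.sum_erase_add n.divisors
        (fun d => x ^ (n-1) * Sfn d x⁻¹ * Dfun (n/d) (x^d) v) (Nat.one_mem_divisors.mpr hn)
      simp only [Nat.div_one, pow_one, Sfn_one, mul_one] at hsplit
      rw [hfull] at hsplit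
      set A := x ^ (n-1) with hA
      set B := v ^ (n-1) with hB
      set D := Dfun n x v with hD
      set E := ∑ d ∈ n.divisors.erase 1, Sfn d x⁻¹ * Dfun (n/d) (x^d) v with hE
      have hAE : A * E = B * D - A * D := by
        have : ∑ d ∈ n.divisors.erase 1, A * Sfn d x⁻¹ * Dfun (n/d) (x^d) v = A * E := by
          rw [hE, Finset.mul_sum]
          exact Finset.sum_congr rfl fun d _ => by ring
        rw [this] at hsplit
        linear_combination hsplit
      have hA0 : A ≠ 0 := pow_ne_zero _ hx0
      have hB0 : B ≠ 0 := pow_ne_zero _ hv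
      have hAB : A - B ≠ 0 := sub_ne_zero.mpr (hx (n-1) (n-1) (by omega) (by omega))
      have hinv : (x⁻¹) ^ (n-1) - (v⁻¹) ^ (n-1) = (B - A) / (A * B) := by
        rw [inv_pow, inv_pow, ← hA, ← hB]
        field_simp
      rw [hinv]
      have hBA : B - A ≠ 0 := fun h => hAB (by linear_combination -h)
      rw [inv_div, div_mul_eq_mul_div, div_eq_iff hBA]
      linear_combination B * hAE

end Statement3Aux

open Statement3Aux

/-- in the field of rational functions `ℚ(u,v)` (realized as the fraction field
of the polynomial ring `ℚ[u,v]`, with `u`, `v` the images of the two variables), the identity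
`D_n(u⁻¹, v⁻¹) = v^(n-1) * D_n(u, v)` holds for every positive integer `n`. -/
theorem statement3 (n : ℕ) (hn : 0 < n) :
    letI Quv := FractionRing (MvPolynomial (Fin 2) ℚ)
    ∀ (u v : Quv), u = algebraMap (MvPolynomial (Fin 2) ℚ) Quv (MvPolynomial.X 0) →
      v = algebraMap (MvPolynomial (Fin 2) ℚ) Quv (MvPolynomial.X 1) →
      Dfun n u⁻¹ v⁻¹ = v ^ (n - 1) * Dfun n u v := by
  intro u v hu hv
  have inj := IsFractionRing.injective (MvPolynomial (Fin 2) ℚ)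
    (FractionRing (MvPolynomial (Fin 2) ℚ))
  have hu0 : u ≠ 0 := by
    rw [hu]
    exact (map_ne_zero_iff _ inj).mpr (MvPolynomial.X_ne_zero 0)
  have hv0 : v ≠ 0 := by
    rw [hv]
    exact (map_ne_zero_iff _ inj).mpr (MvPolynomial.X_ne_zero 1)
  have hx : ∀ a b : ℕ, 0 < a → 0 < b → u ^ a ≠ v ^ b := by
    intro a b ha hb h
    rw [hu, hv, ← map_pow, ← map_pow] at h
    have h2 := inj h
    have h3 := congrArg (MvPolynomial.eval (fun i : Fin 2 => if i = 0 then (0:ℚ) else 1)) h2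
    simp only [map_pow, MvPolynomial.eval_X] at h3
    norm_num [zero_pow ha.ne'] at h3
  exact symm_main v hv0 n hn.ne' u hu0 hx
end

section
/- Let P be a locally finite partially ordered set, A a commutative ring with unity, x < y in P, and Q, Q' ⊆ P subsets complementing the interval [x,y]_P. Then Inv_Q μ (x,y) = −μ_{Q'}(x,y), where μ is the Möbius function of P and μ_{Q'} is the Möbius function of the induced subposet Q'. -/
open Finset
open scoped Classical

variable {P A : Type*}

/-- The zeta function of a poset, as an element of its incidence algebra. -/
noncomputable def zeta [PartialOrder P] [CommRing A] : P → P → A :=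
  fun x y => if x ≤ y then 1 else 0

/-- `IsInvOn Q ε η` says that `η` represents the inverse `Inv_Q ε` of the restriction
`ε|_{Q×Q}` of `ε` in the incidence algebra `I_A(Q)` of the subposet `Q ⊆ P`.
Elements of `I_A(Q)` are encoded as functions `P → P → A` supported on pairs
`x ≤ y` with `x, y ∈ Q`; convolution over `Q` is the sum over `z ∈ [x,y]_Q`,
and the unit of `I_A(Q)` is the Kronecker delta on `Q`. -/
noncomputable def IsInvOn [PartialOrder P] [LocallyFiniteOrder P] [CommRing A]
    (Q : Set P) (ε η : P → P → A) : Prop :=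
  (∀ x y, ¬(x ∈ Q ∧ y ∈ Q ∧ x ≤ y) → η x y = 0) ∧
  (∀ x ∈ Q, ∀ y ∈ Q,
    ∑ z ∈ (Finset.Icc x y).filter (· ∈ Q), ε x z * η z y = if x = y then 1 else 0) ∧
  (∀ x ∈ Q, ∀ y ∈ Q,
    ∑ z ∈ (Finset.Icc x y).filter (· ∈ Q), η x z * ε z y = if x = y then 1 else 0)

/-- let `x < y` in `P` and let `Q, Q'` be subsets complementing the interval
`[x,y]_P` (i.e. `x, y ∈ Q ∩ Q'` and every `z` with `x < z < y` lies in exactly one of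
`Q`, `Q'`).  If `mob` is the Möbius function of `P` (the inverse of `zeta` in `I_A(P)`),
`m` represents `Inv_Q mob`, and `m'` represents `μ_{Q'} = Inv_{Q'} zeta` (the Möbius
function of the subposet `Q'`), then `Inv_Q mob (x,y) = - μ_{Q'}(x,y)`. -/
theorem statement6 [PartialOrder P] [LocallyFiniteOrder P] [CommRing A]
    (x y : P) (hxy : x < y) (Q Q' : Set P)
    (hxQ : x ∈ Q) (hyQ : y ∈ Q) (hxQ' : x ∈ Q') (hyQ' : y ∈ Q')
    (hcompl : ∀ z : P, x < z → z < y → ((z ∈ Q) ↔ ¬ (z ∈ Q')))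
    (mob : P → P → A) (hmob : IsInvOn Set.univ zeta mob)
    (m : P → P → A) (hm : IsInvOn Q mob m)
    (m' : P → P → A) (hm' : IsInvOn Q' zeta m') :
    m x y = - m' x y := by
  classical
  obtain ⟨-, hmobL, hmobR⟩ := hmob
  obtain ⟨-, hmL, hmR⟩ := hm
  obtain ⟨-, hm'L, hm'R⟩ := hm'
  -- diagonal values
  have hmob_diag : mob x x = (1 : A) := by
    have h1 := hmobL x (Set.mem_univ x) x (Set.mem_univ x)
    simpa [zeta] using h1
  have hm_diag : m x x = (1 : A) := by
    have h1 := hmL x hxQ x hxQ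
    simpa [Finset.Icc_self, Finset.filter_singleton, hxQ, hmob_diag] using h1
  have hm'_diag : m' x x = (1 : A) := by
    have h1 := hm'L x hxQ' x hxQ'
    simpa [Finset.Icc_self, Finset.filter_singleton, hxQ', zeta] using h1
  -- the auxiliary function h
  set h : P → A := fun z => ∑ w ∈ (Finset.Icc x z).filter (· ∈ Q), m x w * mob w z with hh
  -- h is the Kronecker delta on Q
  have hB : ∀ w ∈ Q, h w = if x = w then 1 else 0 := by
    intro w hw
    rw [hh]
    exact hmR x hxQ w hw
  -- column sums of the Möbius function
  have hC : ∀ u z : P, u ≤ z → ∑ w ∈ Finset.Icc u z, mob u w = if u = z then 1 else 0 := by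
    intro u z huz
    have h1 := hmobR u (Set.mem_univ u) z (Set.mem_univ z)
    simp only [Set.mem_univ, Finset.filter_true] at h1
    rw [← h1]
    refine Finset.sum_congr rfl fun w hw => ?_
    rw [zeta, if_pos (Finset.mem_Icc.mp hw).2, mul_one]
  -- summing h over an interval
  have hD : ∀ z : P, x ≤ z →
      ∑ w ∈ Finset.Icc x z, h w = if z ∈ Q then m x z else 0 := by
    intro z hz
    have swap : ∑ w ∈ Finset.Icc x z, h w
        = ∑ u ∈ (Finset.Icc x z).filter (· ∈ Q), ∑ w ∈ Finset.Icc u z, m x u * mob u w := by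
      rw [hh]
      refine Finset.sum_comm' ?_
      intro a b
      simp only [Finset.mem_Icc, Finset.mem_filter]
      constructor
      · rintro ⟨⟨hxa, haz⟩, ⟨hxb, hba⟩, hbQ⟩
        exact ⟨⟨hba, haz⟩, ⟨hxb, hba.trans haz⟩, hbQ⟩
      · rintro ⟨⟨hba, haz⟩, ⟨hxb, _⟩, hbQ⟩
        exact ⟨⟨hxb.trans hba, haz⟩, ⟨hxb, hba⟩, hbQ⟩
    rw [swap]
    have step : ∀ u ∈ (Finset.Icc x z).filter (· ∈ Q),
        (∑ w ∈ Finset.Icc u z, m x u * mob u w) = if u = z then m x u else 0 := by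
      intro u hu
      rw [← Finset.mul_sum,
        hC u z (Finset.mem_Icc.mp (Finset.mem_filter.mp hu).1).2, mul_ite, mul_one, mul_zero]
    rw [Finset.sum_congr rfl step, Finset.sum_ite_eq']
    by_cases hzQ : z ∈ Q <;> simp [hzQ, hz]
  -- summing h over Q-points of an interval gives 1
  have hdelta : ∀ z : P, x ≤ z →
      ∑ w ∈ (Finset.Icc x z).filter (· ∈ Q), h w = 1 := by
    intro z hz
    have step : ∀ w ∈ (Finset.Icc x z).filter (· ∈ Q), h w = if x = w then 1 else 0 :=
      fun w hw => hB w (Finset.mem_filter.mp hw).2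
    rw [Finset.sum_congr rfl step, Finset.sum_ite_eq]
    simp [hz, hxQ]
  -- key induction: h agrees with m' on Q'-points below y
  have key : ∀ n : ℕ, ∀ z : P, (Finset.Icc x z).card ≤ n → x ≤ z → z < y → z ∈ Q' →
      h z = m' x z := by
    intro n
    induction n with
    | zero =>
      intro z hcard hxz _ _
      exfalso
      have : z ∈ Finset.Icc x z := Finset.mem_Icc.mpr ⟨hxz, le_rfl⟩
      have := Finset.card_pos.mpr ⟨z, this⟩
      omega
    | succ n ih =>
      intro z hcard hxz hzy hzQ'
      rcases eq_or_lt_of_le hxz with rfl | hxz'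
      · have hx1 : h x = 1 := by
          rw [hh]
          simp [Finset.Icc_self, Finset.filter_singleton, hxQ, hm_diag, hmob_diag]
        rw [hx1, hm'_diag]
      · have hzQ : z ∉ Q := fun hq => ((hcompl z hxz' hzy).mp hq) hzQ'
        set s : Finset P := (Finset.Icc x z).filter (fun w => ¬ w ∈ Q) with hs
        set t : Finset P := (Finset.Icc x z).filter (· ∈ Q') with ht
        have hst : s = t.erase x := by
          ext w
          simp only [hs, ht, Finset.mem_erase, Finset.mem_filter, Finset.mem_Icc]
          constructor
          · rintro ⟨⟨hxw, hwz⟩, hwQ⟩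
            have hwx : w ≠ x := fun e => hwQ (e ▸ hxQ)
            have hxw' : x < w := lt_of_le_of_ne hxw (Ne.symm hwx)
            have hwy : w < y := lt_of_le_of_lt hwz hzy
            exact ⟨hwx, ⟨hxw, hwz⟩, by_contra fun h' => hwQ ((hcompl w hxw' hwy).mpr h')⟩
          · rintro ⟨hwx, ⟨hxw, hwz⟩, hwQ'⟩
            have hxw' : x < w := lt_of_le_of_ne hxw (Ne.symm hwx)
            have hwy : w < y := lt_of_le_of_lt hwz hzy
            exact ⟨⟨hxw, hwz⟩, fun hq => ((hcompl w hxw' hwy).mp hq) hwQ'⟩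
        have hzs : z ∈ s := by
          simp only [hs, Finset.mem_filter, Finset.mem_Icc]
          exact ⟨⟨hxz, le_rfl⟩, hzQ⟩
        have e1 : ∑ w ∈ s, h w = -1 := by
          have total := hD z hxz
          rw [if_neg hzQ] at total
          have split := Finset.sum_filter_add_sum_filter_not (Finset.Icc x z) (· ∈ Q) h
          rw [hdelta z hxz, total] at split
          have : ∑ w ∈ s, h w = (∑ w ∈ Finset.filter (fun w => ¬ w ∈ Q) (Finset.Icc x z), h w) := by
            rw [hs]
          rw [this]
          linear_combination split
        have hIH : ∀ w ∈ s.erase z, h w = m' x w := by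
          intro w hw
          obtain ⟨hwz, hws⟩ := Finset.mem_erase.mp hw
          have hws' := hws
          rw [hs] at hws'
          obtain ⟨hwIcc, hwQ⟩ := Finset.mem_filter.mp hws'
          obtain ⟨hxw, hwz'⟩ := Finset.mem_Icc.mp hwIcc
          have hwltz : w < z := lt_of_le_of_ne hwz' hwz
          have hwQ' : w ∈ Q' := by
            have := hst ▸ hws
            exact (Finset.mem_filter.mp (Finset.mem_of_mem_erase this)).2
          have hsub : Finset.Icc x w ⊂ Finset.Icc x z := by
            refine (Finset.ssubset_iff_of_subset (Finset.Icc_subset_Icc le_rfl hwz')).mpr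
              ⟨z, Finset.mem_Icc.mpr ⟨hxz, le_rfl⟩, fun hmem => ?_⟩
            exact not_le_of_gt hwltz (Finset.mem_Icc.mp hmem).2
          have hcard' : (Finset.Icc x w).card ≤ n := by
            have := Finset.card_lt_card hsub
            omega
          exact ih w hcard' hxw (hwltz.trans hzy) hwQ'
        have e2 : ∑ w ∈ t, m' x w = 0 := by
          have h1 := hm'R x hxQ' z hzQ'
          rw [if_neg (ne_of_lt hxz')] at h1
          rw [← h1, ht]
          refine Finset.sum_congr rfl fun w hw => ?_
          rw [zeta, if_pos (Finset.mem_Icc.mp (Finset.mem_filter.mp hw).1).2, mul_one]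
        have hxt : x ∈ t := by
          simp only [ht, Finset.mem_filter, Finset.mem_Icc]
          exact ⟨⟨le_rfl, hxz⟩, hxQ'⟩
        have e3 : ∑ w ∈ t, m' x w = m' x x + ∑ w ∈ s, m' x w := by
          rw [hst]
          exact (Finset.add_sum_erase t _ hxt).symm
        have e4 : ∑ w ∈ s, m' x w = m' x z + ∑ w ∈ s.erase z, m' x w :=
          (Finset.add_sum_erase s _ hzs).symm
        have e5 : ∑ w ∈ s, h w = h z + ∑ w ∈ s.erase z, h w :=
          (Finset.add_sum_erase s _ hzs).symm
        have e6 : ∑ w ∈ s.erase z, h w = ∑ w ∈ s.erase z, m' x w :=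
          Finset.sum_congr rfl hIH
        linear_combination -e5 + e4 - e6 + e1 + e3 - e2 + hm'_diag
  -- final assembly
  have hxyle : x ≤ y := hxy.le
  set s : Finset P := (Finset.Icc x y).filter (fun w => ¬ w ∈ Q) with hs
  set t : Finset P := (Finset.Icc x y).filter (· ∈ Q') with ht
  have e1 : m x y = 1 + ∑ w ∈ s, h w := by
    have total := hD y hxyle
    rw [if_pos hyQ] at total
    have split := Finset.sum_filter_add_sum_filter_not (Finset.Icc x y) (· ∈ Q) h
    rw [hdelta y hxyle, total] at split
    have : ∑ w ∈ s, h w = (∑ w ∈ Finset.filter (fun w => ¬ w ∈ Q) (Finset.Icc x y), h w) := by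
      rw [hs]
    rw [this]
    linear_combination -split
  have hS : ∀ w ∈ s, h w = m' x w ∧ w ≠ x ∧ w ≠ y ∧ w ∈ Q' := by
    intro w hw
    rw [hs] at hw
    obtain ⟨hwIcc, hwQ⟩ := Finset.mem_filter.mp hw
    obtain ⟨hxw, hwy⟩ := Finset.mem_Icc.mp hwIcc
    have hwx : w ≠ x := fun e => hwQ (e ▸ hxQ)
    have hwy' : w ≠ y := fun e => hwQ (e ▸ hyQ)
    have hxw' : x < w := lt_of_le_of_ne hxw (Ne.symm hwx)
    have hwy'' : w < y := lt_of_le_of_ne hwy hwy'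
    have hwQ' : w ∈ Q' := by_contra fun h' => hwQ ((hcompl w hxw' hwy'').mpr h')
    exact ⟨key (Finset.Icc x w).card w le_rfl hxw hwy'' hwQ', hwx, hwy', hwQ'⟩
  have e6 : ∑ w ∈ s, h w = ∑ w ∈ s, m' x w :=
    Finset.sum_congr rfl fun w hw => (hS w hw).1
  have hst : s = (t.erase x).erase y := by
    ext w
    constructor
    · intro hw
      obtain ⟨-, hwx, hwy, hwQ'⟩ := hS w hw
      have hwIcc := (Finset.mem_filter.mp (hs ▸ hw)).1
      exact Finset.mem_erase.mpr ⟨hwy, Finset.mem_erase.mpr ⟨hwx,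
        Finset.mem_filter.mpr ⟨hwIcc, hwQ'⟩⟩⟩
    · intro hw
      obtain ⟨hwy, hw2⟩ := Finset.mem_erase.mp hw
      obtain ⟨hwx, hw3⟩ := Finset.mem_erase.mp hw2
      obtain ⟨hwIcc, hwQ'⟩ := Finset.mem_filter.mp (ht ▸ hw3)
      obtain ⟨hxw, hwyle⟩ := Finset.mem_Icc.mp hwIcc
      have hxw' : x < w := lt_of_le_of_ne hxw (Ne.symm hwx)
      have hwy'' : w < y := lt_of_le_of_ne hwyle hwy
      rw [hs]
      exact Finset.mem_filter.mpr ⟨hwIcc, fun hq => ((hcompl w hxw' hwy'').mp hq) hwQ'⟩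
  have e2 : ∑ w ∈ t, m' x w = 0 := by
    have h1 := hm'R x hxQ' y hyQ'
    rw [if_neg (ne_of_lt hxy)] at h1
    rw [← h1, ht]
    refine Finset.sum_congr rfl fun w hw => ?_
    rw [zeta, if_pos (Finset.mem_Icc.mp (Finset.mem_filter.mp hw).1).2, mul_one]
  have hxt : x ∈ t := by
    simp only [ht, Finset.mem_filter, Finset.mem_Icc]
    exact ⟨⟨le_rfl, hxyle⟩, hxQ'⟩
  have hyt : y ∈ t.erase x := by
    refine Finset.mem_erase.mpr ⟨(ne_of_lt hxy).symm, ?_⟩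
    simp only [ht, Finset.mem_filter, Finset.mem_Icc]
    exact ⟨⟨hxyle, le_rfl⟩, hyQ'⟩
  have e3 : ∑ w ∈ t, m' x w = m' x x + ∑ w ∈ t.erase x, m' x w :=
    (Finset.add_sum_erase t _ hxt).symm
  have e4 : ∑ w ∈ t.erase x, m' x w = m' x y + ∑ w ∈ s, m' x w := by
    rw [hst]
    exact (Finset.add_sum_erase (t.erase x) _ hyt).symm
  linear_combination e1 + e6 + e2 - e3 - e4 - hm'_diag
end

section
/- Let P be a locally finite partially ordered set, A a commutative ring with unity, and Q ⊆ P. Then for all x ∈ P and y ∈ Q: Γ_Q(x,y) = −Inv_{Q ∪ {x}} μ (x,y) if x ∉ Q; Γ_Q(x,y) = 1 if x = y; and Γ_Q(x,y) = 0 otherwise (i.e., if x ∈ Q and x ≠ y). -/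
open Finset
open scoped Classical

variable {P A : Type*}

lemma mob_diag [PartialOrder P] [LocallyFiniteOrder P] [CommRing A]
    (mob : P → P → A) (hmob : IsInvOn Set.univ zeta mob) (x : P) : mob x x = 1 := by
  have h := hmob.2.1 x (Set.mem_univ x) x (Set.mem_univ x)
  simpa [Finset.Icc_self, zeta] using h

lemma key [PartialOrder P] [LocallyFiniteOrder P] [CommRing A]
    (Q : Set P) (x : P)
    (mob : P → P → A) (hmob : IsInvOn Set.univ zeta mob)
    (m : P → P → A) (hm : IsInvOn Q mob m)
    (mx : P → P → A) (hmx : IsInvOn (Q ∪ {x}) mob mx) :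
    ∀ n z w, (Finset.Icc z w).card ≤ n → z ∈ Q → w ∈ Q → ¬(z ≤ x ∧ x ≤ w) →
      mx z w = m z w := by
  intro n
  induction n with
  | zero =>
    intro z w hc hz hw hxz
    have hnle : ¬ z ≤ w := by
      intro h
      have := Finset.card_pos.mpr ⟨z, Finset.mem_Icc.mpr ⟨le_refl z, h⟩⟩
      omega
    rw [hm.1 z w (by tauto), hmx.1 z w (by tauto)]
  | succ n ih =>
    intro z w hc hz hw hxz
    by_cases hzw : z ≤ w
    · have h1 := hm.2.1 z hz w hw
      have h2 := hmx.2.1 z (Or.inl hz) w (Or.inl hw)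
      have h2' : ∑ u ∈ (Finset.Icc z w).filter (· ∈ Q), mob z u * mx u w
          = if z = w then 1 else 0 := by
        refine Eq.trans ?_ h2
        refine Finset.sum_congr ?_ (fun _ _ => rfl)
        ext u
        simp only [Finset.mem_filter, Finset.mem_Icc, Set.mem_union, Set.mem_singleton_iff]
        constructor
        · rintro ⟨hu, h⟩
          exact ⟨hu, Or.inl h⟩
        · rintro ⟨hu, (h | h)⟩
          · exact ⟨hu, h⟩
          · exact absurd ⟨h ▸ hu.1, h ▸ hu.2⟩ hxz
      have hsum : ∑ u ∈ (Finset.Icc z w).filter (· ∈ Q), mob z u * (mx u w - m u w) = 0 := by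
        simp only [mul_sub, Finset.sum_sub_distrib]
        rw [h1, h2', sub_self]
      have hzmem : z ∈ (Finset.Icc z w).filter (· ∈ Q) := by
        simp [Finset.mem_Icc, hzw, hz]
      rw [← Finset.add_sum_erase _ _ hzmem] at hsum
      have hrest : ∀ u ∈ ((Finset.Icc z w).filter (· ∈ Q)).erase z,
          mob z u * (mx u w - m u w) = 0 := by
        intro u hu
        have hune := Finset.ne_of_mem_erase hu
        have hu' := Finset.mem_of_mem_erase hu
        simp only [Finset.mem_filter, Finset.mem_Icc] at hu'
        have hmxm : mx u w = m u w := by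
          apply ih u w ?_ hu'.2 hw
          · rintro ⟨h1', h2'⟩
            exact hxz ⟨hu'.1.1.trans h1', h2'⟩
          · have hsub : Finset.Icc u w ⊂ Finset.Icc z w := by
              constructor
              · intro v hv
                rw [Finset.mem_Icc] at hv ⊢
                exact ⟨hu'.1.1.trans hv.1, hv.2⟩
              · intro hsub'
                have hzm : z ∈ Finset.Icc u w := hsub' (Finset.mem_Icc.mpr ⟨le_refl z, hzw⟩)
                rw [Finset.mem_Icc] at hzm
                exact hune (le_antisymm hu'.1.1 hzm.1).symm
            have := Finset.card_lt_card hsub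
            omega
        rw [hmxm, sub_self, mul_zero]
      rw [Finset.sum_eq_zero hrest, add_zero, mob_diag mob hmob, one_mul] at hsum
      exact sub_eq_zero.mp hsum
    · rw [hm.1 z w (by tauto), hmx.1 z w (by tauto)]

/-- let `mob` be the Möbius function of `P`, let `Q ⊆ P`, and define
`Γ_Q(x,y) = Σ_{x ≤ z ≤ y, z ∈ Q} mob(x,z) · Inv_Q mob (z,y)` for `x ∈ P`, `y ∈ Q`.
Then `Γ_Q(x,y) = -Inv_{Q ∪ {x}} mob (x,y)` if `x ∉ Q`, `Γ_Q(x,y) = 1` if `x = y`,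
and `Γ_Q(x,y) = 0` otherwise.  Here `m` represents `Inv_Q mob` and `mx` represents
`Inv_{Q ∪ {x}} mob`. -/
theorem statement7 [PartialOrder P] [LocallyFiniteOrder P] [CommRing A]
    (Q : Set P) (x y : P) (hy : y ∈ Q)
    (mob : P → P → A) (hmob : IsInvOn Set.univ zeta mob)
    (m : P → P → A) (hm : IsInvOn Q mob m)
    (mx : P → P → A) (hmx : IsInvOn (Q ∪ {x}) mob mx) :
    ∑ z ∈ (Finset.Icc x y).filter (· ∈ Q), mob x z * m z y =
      if x ∉ Q then - mx x y else if x = y then 1 else 0 := by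
  by_cases hx : x ∈ Q
  · simp only [hx, not_true_eq_false, if_false]
    exact hm.2.1 x hx y hy
  · simp only [hx, not_false_eq_true, if_true]
    have hxy : x ≠ y := fun h => hx (h ▸ hy)
    by_cases hle : x ≤ y
    · have h2 := hmx.2.1 x (Or.inr rfl) y (Or.inl hy)
      rw [if_neg hxy] at h2
      have hxnot : x ∉ (Finset.Icc x y).filter (· ∈ Q) := by
        simp [hx]
      have h2' : mob x x * mx x y + ∑ z ∈ (Finset.Icc x y).filter (· ∈ Q), mob x z * mx z y
          = 0 := by
        refine Eq.trans ?_ h2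
        refine Eq.trans (Eq.symm (Finset.sum_insert (f := fun z => mob x z * mx z y) hxnot)) ?_
        refine Finset.sum_congr ?_ (fun _ _ => rfl)
        ext u
        simp only [Finset.mem_filter, Finset.mem_insert, Finset.mem_Icc,
          Set.mem_union, Set.mem_singleton_iff]
        constructor
        · rintro (h | ⟨hu, h⟩)
          · exact ⟨by simp [h, hle], Or.inr h⟩
          · exact ⟨hu, Or.inl h⟩
        · rintro ⟨hu, (h | h)⟩
          · exact Or.inr ⟨hu, h⟩
          · exact Or.inl h
      rw [mob_diag mob hmob, one_mul] at h2'
      have heq : ∀ z ∈ (Finset.Icc x y).filter (· ∈ Q), mob x z * mx z y = mob x z * m z y := by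
        intro z hz
        simp only [Finset.mem_filter, Finset.mem_Icc] at hz
        rw [key Q x mob hmob m hm mx hmx (Finset.Icc z y).card z y le_rfl hz.2 hy]
        rintro ⟨h1', _⟩
        exact hx (le_antisymm h1' hz.1.1 ▸ hz.2)
      rw [Finset.sum_congr rfl heq] at h2'
      linear_combination h2'
    · have hIcc : Finset.Icc x y = ∅ := Finset.Icc_eq_empty hle
      rw [hIcc]
      have : mx x y = 0 := hmx.1 x y (by tauto)
      simp [this]
end

section
/- Let P be a locally finite partially ordered set, Q ⊆ P, and x, y ∈ Q with x ≤ y. Then Inv_Q θ (x,y) lies in the ℚ-span of the [x,y]_Q-admissible monomials. Moreover, if m is an [x,y]_Q-admissible monomial with admissible form (t_{w₁}/t_{z₁})⋯(t_{w_k}/t_{z_k}), then the coefficient of m in Inv_Q θ (x,y) equals Inv_Q μ (x,z₁) · ∏_{i=1}^{k} μ_{Q_i}(z_i, w_i) · Γ_Q(w_i, z_{i+1}), where z_{k+1} = y and Q_i = Q ∪ {w_i}. -/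
open Finset
open scoped Classical

variable {P A : Type*}

/-- The Laurent polynomial algebra `A_P = ℚ[t_x^{±1} : x ∈ P]`, realized as the monoid
algebra of `ℚ` over the additive group of finitely supported exponent vectors `P →₀ ℤ`. -/
abbrev AP (P : Type*) : Type _ := AddMonoidAlgebra ℚ (P →₀ ℤ)

/-- The exponent vector of the variable `t_x`. -/
noncomputable def tv (x : P) : P →₀ ℤ := Finsupp.single x 1

/-- The element `θ(x,y) = Σ_{x ≤ z ≤ y} μ(z,y) · t_z/t_x` of `I_{A_P}(P)`,
where `mob` is the Möbius function of `P`. -/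
noncomputable def theta [PartialOrder P] [LocallyFiniteOrder P]
    (mob : P → P → ℚ) (x y : P) : AP P :=
  ∑ z ∈ Finset.Icc x y, mob z y • AddMonoidAlgebra.single (tv z - tv x) (1 : ℚ)

/-!
Taking coefficients of `t^v` in `θ * Inv_Q θ = 1`, with `θ(a, a) = 1`, gives the recursion

  `[t^v] Inv_Q θ (a,y) = δ - ∑_{c ∈ (a,y]_Q, a ≤ u ≤ c} μ(u,c) [t^(v + e_a - e_u)] Inv_Q θ (c,y)`,

and downward induction on `a` shows that only `[a, y]_Q`-admissible monomials occur.
Admissible exponents `v` vanish outside `[a, y]` and have nonpositive mass `∑_{q ≤ p} v q`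
below every `p`. For a reduced monomial these two constraints kill all terms of the
recursion except `u = a` when `a < z₁`, and except `u = w₁` or `u = c < w₁` when `a = z₁`.
The surviving coefficients are known by induction, and the remaining sums collapse by the
inversion relations of `Inv_Q μ` and of the Möbius function of `Q ∪ {w₁}`.
-/

section
variable [PartialOrder P] [LocallyFiniteOrder P]

theorem downward_induction_le {y : P} {p : P → Prop}
    (step : ∀ a ≤ y, (∀ c, a < c → c ≤ y → p c) → p a) : ∀ a ≤ y, p a := by
  suffices ∀ n, ∀ a ≤ y, #(Icc a y) = n → p a from fun a ha => this _ a ha rfl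
  intro n
  induction n using Nat.strong_induction_on with
  | _ n ih =>
    rintro a hay rfl
    exact step a hay fun c hac hcy =>
      ih _ (card_lt_card (Icc_ssubset_Icc_left (hac.le.trans hcy) hac le_rfl)) c hcy rfl

namespace IsInvOn
variable [CommRing A] {Q : Set P} {ε η : P → P → A} {a b y : P}

theorem eq_zero_of_not_le (h : IsInvOn Q ε η) (hab : ¬ a ≤ b) : η a b = 0 :=
  h.1 a b fun h' => hab h'.2.2

theorem apply_self (h : IsInvOn Q ε η) (ha : a ∈ Q) (hε : ε a a = 1) : η a a = 1 := by
  simpa [Icc_self, filter_singleton, ha, hε] using h.2.1 a ha a ha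

theorem sum_mul_eq_of_le (h : IsInvOn Q ε η) (ha : a ∈ Q) (hb : b ∈ Q) (hby : b ≤ y) :
    ∑ c ∈ Icc a y with c ∈ Q, ε a c * η c b = if a = b then 1 else 0 := by
  rw [← h.2.1 a ha b hb]
  refine (sum_subset (fun c hc => ?_) fun c hc hc' => ?_).symm
  · simp only [mem_filter, mem_Icc] at hc ⊢
    exact ⟨⟨hc.1.1, hc.1.2.trans hby⟩, hc.2⟩
  · simp only [mem_filter, mem_Icc] at hc hc'
    rw [h.eq_zero_of_not_le fun hcb => hc' ⟨⟨hc.1.1, hcb⟩, hc.2⟩, mul_zero]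

theorem sum_apply_of_zeta (h : IsInvOn Q zeta η) (ha : a ∈ Q) (hb : b ∈ Q) :
    ∑ c ∈ Icc a b with c ∈ Q, η c b = if a = b then 1 else 0 := by
  rw [← h.2.1 a ha b hb]
  refine sum_congr rfl fun c hc => ?_
  rw [zeta, if_pos (mem_Icc.mp (mem_filter.mp hc).1).1, one_mul]

end IsInvOn

theorem mob_self {mob : P → P → ℚ} (hmob : IsInvOn Set.univ zeta mob) (a : P) : mob a a = 1 :=
  hmob.apply_self (Set.mem_univ a) (by simp [zeta])

theorem theta_self {mob : P → P → ℚ} (hmob : IsInvOn Set.univ zeta mob) (a : P) :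
    theta mob a a = 1 := by
  rw [theta, Icc_self, sum_singleton, mob_self hmob, sub_self, one_smul,
    AddMonoidAlgebra.one_def]

theorem coeff_theta_mul (mob : P → P → ℚ) (a c : P) (F : AP P) (v : P →₀ ℤ) :
    (theta mob a c * F).coeff v = ∑ u ∈ Icc a c, mob u c * F.coeff (v + tv a - tv u) := by
  simp only [theta, sum_mul, AddMonoidAlgebra.coeff_sum, Finset.sum_apply', smul_mul_assoc,
    AddMonoidAlgebra.coeff_smul_apply, AddMonoidAlgebra.coeff_single_mul_apply, one_mul,
    smul_eq_mul]
  congr! 3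
  abel

theorem coeff_invTheta {Q : Set P} {mob : P → P → ℚ} {invθ : P → P → AP P}
    (hmob : IsInvOn Set.univ zeta mob) (hinvθ : IsInvOn Q (theta mob) invθ)
    {a y : P} (ha : a ∈ Q) (hy : y ∈ Q) (hay : a ≤ y) (v : P →₀ ℤ) :
    (invθ a y).coeff v = (if a = y ∧ v = 0 then 1 else 0) -
      ∑ c ∈ Ioc a y with c ∈ Q, ∑ u ∈ Icc a c, mob u c * (invθ c y).coeff (v + tv a - tv u) := by
  have hrec := hinvθ.2.1 a ha y hy
  rw [← Ioc_insert_left hay, filter_insert, if_pos ha,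
    sum_insert (by simp), theta_self hmob, one_mul] at hrec
  have hcoeff := congrArg (fun F : AP P => F.coeff v) hrec
  simp only [AddMonoidAlgebra.coeff_add, AddMonoidAlgebra.coeff_sum, Finsupp.add_apply,
    Finset.sum_apply', coeff_theta_mul] at hcoeff
  rw [eq_sub_iff_add_eq, hcoeff]
  by_cases hay' : a = y
  · simp [hay', AddMonoidAlgebra.one_def, Finsupp.single_apply, eq_comm]
  · simp [hay']

end

/-- The exponent vector of the monomial `∏ i, t_{w i} / t_{z i}`. -/
noncomputable def chainExp {k : ℕ} (z : Fin (k + 1) → P) (w : Fin k → P) : P →₀ ℤ :=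
  ∑ i, (tv (w i) - tv (z i.castSucc))

/-- `massBelow p v = ∑_{q ≤ p} v q`. Admissible exponents have nonpositive mass below every
point, since each factor `t_w / t_z` has `z ≤ w`. -/
noncomputable def massBelow [PartialOrder P] (p : P) : (P →₀ ℤ) →+ ℤ :=
  Finsupp.liftAddHom fun q => if q ≤ p then AddMonoidHom.id ℤ else 0

/-- `z₀ ≤ w₀ ≤ z₁ ≤ ⋯ ≤ w_{k-1} ≤ z_k = y`, with all `z i` (`i < k`) in `Q`. -/
structure IsAdmissibleChain [PartialOrder P] (Q : Set P) (y : P) {k : ℕ} (z : Fin (k + 1) → P)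
    (w : Fin k → P) : Prop where
  last_eq : z (Fin.last k) = y
  mem : ∀ i : Fin k, z i.castSucc ∈ Q
  le_w : ∀ i : Fin k, z i.castSucc ≤ w i
  w_le : ∀ i : Fin k, w i ≤ z i.succ

structure IsReducedChain [PartialOrder P] (Q : Set P) (y : P) {k : ℕ} (z : Fin (k + 1) → P)
    (w : Fin k → P) : Prop extends IsAdmissibleChain Q y z w where
  w_ne : ∀ i j : Fin k, w i ≠ z j.castSucc

def IsAdmissible [PartialOrder P] (Q : Set P) (a y : P) (v : P →₀ ℤ) : Prop :=
  ∃ (k : ℕ) (z : Fin (k + 1) → P) (w : Fin k → P),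
    IsAdmissibleChain Q y z w ∧ (∀ i : Fin k, a ≤ z i.castSucc) ∧ v = chainExp z w

theorem tv_apply (q p : P) : tv q p = if q = p then 1 else 0 := by
  simp [tv, Finsupp.single_apply]

theorem chainExp_succ {k : ℕ} (z : Fin (k + 2) → P) (w : Fin (k + 1) → P) :
    chainExp z w = tv (w 0) - tv (z 0) + chainExp (Fin.tail z) (Fin.tail w) := by
  rw [chainExp, Fin.sum_univ_succ]
  rfl

section
variable [PartialOrder P] {k : ℕ} {z : Fin (k + 1) → P} {w : Fin k → P}

theorem massBelow_tv (p q : P) : massBelow p (tv q) = if q ≤ p then 1 else 0 := by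
  rw [massBelow, tv, Finsupp.liftAddHom_apply_single]
  split_ifs <;> rfl

theorem chainExp_apply_eq_zero (hle : ∀ i : Fin k, z i.castSucc ≤ w i) {p : P}
    (hp : ∀ i : Fin k, ¬ z i.castSucc ≤ p) : chainExp z w p = 0 := by
  rw [chainExp, Finset.sum_apply']
  refine sum_eq_zero fun i _ => ?_
  have hw : w i ≠ p := fun h => hp i (h ▸ hle i)
  have hz : z i.castSucc ≠ p := fun h => hp i h.le
  simp [tv_apply, hw, hz]

theorem massBelow_chainExp_eq_zero (hle : ∀ i : Fin k, z i.castSucc ≤ w i) {p : P}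
    (hp : ∀ i : Fin k, ¬ z i.castSucc ≤ p) : massBelow p (chainExp z w) = 0 := by
  rw [chainExp, map_sum]
  refine sum_eq_zero fun i _ => ?_
  have hw : ¬ w i ≤ p := fun h => hp i ((hle i).trans h)
  simp [massBelow_tv, hw, hp i]

theorem massBelow_chainExp_nonpos (hle : ∀ i : Fin k, z i.castSucc ≤ w i) (p : P) :
    massBelow p (chainExp z w) ≤ 0 := by
  rw [chainExp, map_sum]
  refine sum_nonpos fun i _ => ?_
  rw [map_sub, massBelow_tv, massBelow_tv]
  split_ifs with hw hz <;> simp_all [(hle i).trans]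

namespace IsAdmissibleChain

theorem monotone (h : IsAdmissibleChain Q y z w) : Monotone z :=
  Fin.monotone_iff_le_succ.mpr fun i => (h.le_w i).trans (h.w_le i)

theorem monotone_w (h : IsAdmissibleChain Q y z w) : Monotone w := fun i j hij => by
  rcases hij.eq_or_lt with rfl | hij
  · rfl
  · exact (h.w_le i).trans ((h.monotone (Fin.succ_le_castSucc_iff.mpr hij)).trans (h.le_w j))

theorem mem_of_mem_last (h : IsAdmissibleChain Q y z w) (hy : y ∈ Q) (i : Fin (k + 1)) :
    z i ∈ Q :=
  Fin.lastCases (h.last_eq ▸ hy) h.mem i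

theorem le_last (h : IsAdmissibleChain Q y z w) (i : Fin (k + 1)) : z i ≤ y :=
  h.last_eq ▸ h.monotone (Fin.le_last i)

end IsAdmissibleChain

theorem isAdmissible_zero (Q : Set P) (a y : P) : IsAdmissible Q a y 0 :=
  ⟨0, fun _ => y, Fin.elim0, ⟨rfl, nofun, nofun, nofun⟩, nofun, by simp [chainExp]⟩

namespace IsAdmissible
variable {Q : Set P} {a c u y : P} {v : P →₀ ℤ}

theorem cons (ha : a ∈ Q) (hau : a ≤ u) (huc : u ≤ c) (hcy : c ≤ y)
    (h : IsAdmissible Q c y v) : IsAdmissible Q a y (tv u - tv a + v) := by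
  obtain ⟨k, z, w, hchain, hcz, rfl⟩ := h
  have hcz0 : c ≤ z 0 := by
    cases k with
    | zero => exact hchain.last_eq ▸ hcy
    | succ k => exact hcz 0
  refine ⟨k + 1, Fin.cons a z, Fin.cons u w, ⟨?_, ?_, ?_, ?_⟩, ?_, ?_⟩
  · simpa [← Fin.succ_last] using hchain.last_eq
  · exact Fin.cases (by simpa using ha) fun i => by simpa [← Fin.succ_castSucc] using hchain.mem i
  · exact Fin.cases (by simpa using hau) fun i => by
      simpa [← Fin.succ_castSucc] using hchain.le_w i
  · exact Fin.cases (by simpa using huc.trans hcz0) fun i => by simpa using hchain.w_le i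
  · exact Fin.cases (by simp) fun i => by
      simpa [← Fin.succ_castSucc] using (hau.trans huc).trans (hcz i)
  · rw [chainExp_succ]
    rfl

theorem apply_eq_zero (h : IsAdmissible Q a y v) {p : P} (hp : ¬ a ≤ p) : v p = 0 := by
  obtain ⟨k, z, w, hchain, haz, rfl⟩ := h
  exact chainExp_apply_eq_zero hchain.le_w fun i hi => hp ((haz i).trans hi)

theorem massBelow_nonpos (h : IsAdmissible Q a y v) (p : P) : massBelow p v ≤ 0 := by
  obtain ⟨k, z, w, hchain, -, rfl⟩ := h
  exact massBelow_chainExp_nonpos hchain.le_w p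

end IsAdmissible

end

namespace IsReducedChain
variable [PartialOrder P] {Q : Set P} {y : P} {k : ℕ}

theorem lt_w {z : Fin (k + 1) → P} {w : Fin k → P} (h : IsReducedChain Q y z w) (i : Fin k) :
    z i.castSucc < w i :=
  (h.le_w i).lt_of_ne (h.w_ne i i).symm

theorem w_lt {z : Fin (k + 1) → P} {w : Fin k → P} (h : IsReducedChain Q y z w) {i j : Fin k}
    (hij : i < j) : w i < z j.castSucc :=
  ((h.w_le i).trans (h.monotone (Fin.succ_le_castSucc_iff.mpr hij))).lt_of_ne (h.w_ne i j)

theorem tail {z : Fin (k + 2) → P} {w : Fin (k + 1) → P} (h : IsReducedChain Q y z w) :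
    IsReducedChain Q y (Fin.tail z) (Fin.tail w) where
  last_eq := h.last_eq
  mem i := by simpa [Fin.tail, ← Fin.succ_castSucc] using h.mem i.succ
  le_w i := by simpa [Fin.tail, ← Fin.succ_castSucc] using h.le_w i.succ
  w_le i := h.w_le i.succ
  w_ne i j := by simpa [Fin.tail, ← Fin.succ_castSucc] using h.w_ne i.succ j.succ

theorem update_zero {z : Fin (k + 2) → P} {w : Fin (k + 1) → P} (h : IsReducedChain Q y z w)
    {c : P} (hc : c ∈ Q) (hcw : c < w 0) : IsReducedChain Q y (Function.update z 0 c) w where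
  last_eq := by simpa [Function.update_of_ne (Fin.last_pos.ne')] using h.last_eq
  mem := Fin.cases (by simpa using hc) fun i => by
    simpa [← Fin.succ_castSucc] using h.mem i.succ
  le_w := Fin.cases (by simpa using hcw.le) fun i => by
    simpa [← Fin.succ_castSucc] using h.le_w i.succ
  w_le i := by simpa [Fin.succ_ne_zero] using h.w_le i
  w_ne i := Fin.cases (by simpa using (hcw.trans_le (h.monotone_w (Fin.zero_le i))).ne') fun j => by
    simpa [← Fin.succ_castSucc] using h.w_ne i j.succ

section
variable {z : Fin (k + 2) → P} {w : Fin (k + 1) → P}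

theorem not_tail_le (h : IsReducedChain Q y z w) (i : Fin k) : ¬ Fin.tail z i.castSucc ≤ w 0 := by
  simpa [Fin.tail, ← Fin.succ_castSucc] using (h.w_lt (Fin.succ_pos i)).not_ge

theorem chainExp_apply_zero (h : IsReducedChain Q y z w) : chainExp z w (z 0) = -1 := by
  have hzw : z 0 < w 0 := by simpa using h.lt_w 0
  rw [chainExp_succ, Finsupp.add_apply, Finsupp.sub_apply, tv_apply, tv_apply, if_neg hzw.ne',
    if_pos rfl, chainExp_apply_eq_zero h.tail.le_w fun i hi => h.not_tail_le i (hi.trans hzw.le)]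
  rfl

end

end IsReducedChain

section
variable [PartialOrder P] [LocallyFiniteOrder P]

noncomputable def gamma (Q : Set P) (mob invμ : P → P → ℚ) (a b : P) : ℚ :=
  ∑ c ∈ Icc a b with c ∈ Q, mob a c * invμ c b

/-- `∏ i, μ_{Q ∪ {w i}}(z i, w i) · Γ_Q(w i, z (i + 1))`, with `mQ i` in the role of
`μ_{Q ∪ {w i}}`. -/
noncomputable def chainWeight (Q : Set P) (mob invμ : P → P → ℚ) {k : ℕ}
    (mQ : Fin k → P → P → ℚ) (z : Fin (k + 1) → P) (w : Fin k → P) : ℚ :=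
  ∏ i, mQ i (z i.castSucc) (w i) * gamma Q mob invμ (w i) (z i.succ)

theorem chainWeight_succ (Q : Set P) (mob invμ : P → P → ℚ) {k : ℕ}
    (mQ : Fin (k + 1) → P → P → ℚ) (z : Fin (k + 2) → P) (w : Fin (k + 1) → P) :
    chainWeight Q mob invμ mQ z w = mQ 0 (z 0) (w 0) * gamma Q mob invμ (w 0) (z 1) *
      chainWeight Q mob invμ (Fin.tail mQ) (Fin.tail z) (Fin.tail w) := by
  rw [chainWeight, Fin.prod_univ_succ]
  rfl

variable {Q : Set P} {mob invμ : P → P → ℚ} {a b w y : P}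

theorem IsInvOn.sum_Ioc_mul_eq [CommRing A] {ε η : P → P → A} (h : IsInvOn Q ε η)
    (ha : a ∈ Q) (hay : a ≤ y) (hε : ε a a = 1) (hb : b ∈ Q) (hby : b ≤ y) :
    ∑ c ∈ Ioc a y with c ∈ Q, ε a c * η c b = (if a = b then 1 else 0) - η a b := by
  rw [← h.sum_mul_eq_of_le ha hb hby, ← Ioc_insert_left hay, filter_insert, if_pos ha,
    sum_insert (by simp), hε, one_mul, add_sub_cancel_left]

theorem sum_Ioc_ite_le_eq_gamma (hinvμ : IsInvOn Q mob invμ) (haw : a < w) (hby : b ≤ y) :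
    ∑ c ∈ Ioc a y with c ∈ Q, (if w ≤ c then mob w c * invμ c b else 0) =
      gamma Q mob invμ w b := by
  rw [← sum_filter, filter_filter, gamma]
  refine (sum_subset (fun c hc => ?_) (fun c hc hc' => ?_)).symm
  · simp only [mem_filter, mem_Icc, mem_Ioc] at hc ⊢
    exact ⟨⟨haw.trans_le hc.1.1, hc.1.2.trans hby⟩, hc.2, hc.1.1⟩
  · simp only [mem_filter, mem_Icc, mem_Ioc] at hc hc'
    rw [hinvμ.eq_zero_of_not_le fun hcb => hc' ⟨⟨hc.2.2, hcb⟩, hc.2.1⟩, mul_zero]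

theorem IsInvOn.sum_Ioc_ite_lt_of_zeta {m : P → P → ℚ} (hm : IsInvOn (Q ∪ {w}) zeta m) (ha : a ∈ Q)
    (haw : a < w) (hwy : w ≤ y) :
    ∑ c ∈ Ioc a y with c ∈ Q, (if c < w then m c w else 0) = -1 - m a w := by
  have hsum := hm.sum_apply_of_zeta (Or.inl ha) (Or.inr rfl)
  -- `filter_congr_decidable` replaces the classical instance coming from `IsInvOn`
  rw [filter_congr_decidable, if_neg haw.ne, ← Ico_insert_right haw.le, ← Ioo_insert_left haw,
    filter_insert, if_pos (by simp), filter_insert, if_pos (by simp [ha]),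
    sum_insert (by simp [haw.ne']), sum_insert (by simp),
    hm.apply_self (Or.inr rfl) (by simp [zeta])] at hsum
  have hmem : ∀ c ∈ Ioo a w, c ∈ Q ∪ {w} ↔ c ∈ Q := fun c hc => by
    simp [(mem_Ioo.mp hc).2.ne]
  have hIoo : {c ∈ Ioc a y | c ∈ Q ∧ c < w} = {c ∈ Ioo a w | c ∈ Q} := by
    ext c
    simp only [mem_filter, mem_Ioo, mem_Ioc]
    exact ⟨fun h => ⟨⟨h.1.1, h.2.2⟩, h.2.1⟩, fun h => ⟨⟨h.1.1, h.1.2.le.trans hwy⟩, h.2, h.1.2⟩⟩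
  rw [filter_congr hmem] at hsum
  rw [← sum_filter, filter_filter, hIoo]
  linarith

end

section
variable [PartialOrder P] [LocallyFiniteOrder P] {Q : Set P} {mob invμ : P → P → ℚ}
  {invθ : P → P → AP P} {y : P}

theorem isAdmissible_of_coeff_invTheta_ne_zero (hmob : IsInvOn Set.univ zeta mob)
    (hinvθ : IsInvOn Q (theta mob) invθ) (hy : y ∈ Q) :
    ∀ a ≤ y, a ∈ Q → ∀ v, (invθ a y).coeff v ≠ 0 → IsAdmissible Q a y v := by
  refine downward_induction_le fun a hay ih ha v hv => ?_
  rw [coeff_invTheta hmob hinvθ ha hy hay] at hv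
  by_cases hδ : a = y ∧ v = 0
  · exact hδ.2 ▸ isAdmissible_zero Q a y
  obtain ⟨c, hc, hc'⟩ := exists_ne_zero_of_sum_ne_zero (by simpa [hδ] using hv)
  obtain ⟨u, hu, hu'⟩ := exists_ne_zero_of_sum_ne_zero hc'
  simp only [mem_filter, mem_Ioc] at hc
  simp only [mem_Icc] at hu
  have hadm := ih c hc.1.1 hc.1.2 hc.2 _ (right_ne_zero_of_mul hu')
  simpa using hadm.cons ha hu.1 hu.2 hc.1.2

theorem invTheta_mem_supported (hmob : IsInvOn Set.univ zeta mob)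
    (hinvθ : IsInvOn Q (theta mob) invθ) (hy : y ∈ Q) {a : P} (ha : a ∈ Q) (hay : a ≤ y) :
    invθ a y ∈ AddMonoidAlgebra.supported ℚ ℚ {v | IsAdmissible Q a y v} :=
  AddMonoidAlgebra.mem_supported'.mpr fun _ hv => not_not.mp fun hne =>
    hv (isAdmissible_of_coeff_invTheta_ne_zero hmob hinvθ hy a hay ha _ hne)

theorem coeff_invTheta_eq_zero_of_apply_ne_zero (hmob : IsInvOn Set.univ zeta mob)
    (hinvθ : IsInvOn Q (theta mob) invθ) (hy : y ∈ Q) {c : P} (hc : c ∈ Q) (hcy : c ≤ y)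
    {v : P →₀ ℤ} {p : P} (hvp : v p ≠ 0) (hcp : ¬ c ≤ p) : (invθ c y).coeff v = 0 :=
  not_not.mp fun hne =>
    hvp ((isAdmissible_of_coeff_invTheta_ne_zero hmob hinvθ hy c hcy hc v hne).apply_eq_zero hcp)

theorem coeff_invTheta_eq_zero_of_massBelow_pos (hmob : IsInvOn Set.univ zeta mob)
    (hinvθ : IsInvOn Q (theta mob) invθ) (hy : y ∈ Q) {c : P} (hc : c ∈ Q) (hcy : c ≤ y)
    {v : P →₀ ℤ} {p : P} (hp : 0 < massBelow p v) : (invθ c y).coeff v = 0 :=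
  not_not.mp fun hne => hp.not_ge
    ((isAdmissible_of_coeff_invTheta_ne_zero hmob hinvθ hy c hcy hc v hne).massBelow_nonpos p)


theorem coeff_invTheta_of_massBelow_eq_zero (hmob : IsInvOn Set.univ zeta mob)
    (hinvθ : IsInvOn Q (theta mob) invθ) (hy : y ∈ Q) {a : P} (ha : a ∈ Q) (hay : a ≤ y)
    {v : P →₀ ℤ} (hv : massBelow a v = 0) :
    (invθ a y).coeff v = (if a = y ∧ v = 0 then 1 else 0) -
      ∑ c ∈ Ioc a y with c ∈ Q, mob a c * (invθ c y).coeff v := by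
  rw [coeff_invTheta hmob hinvθ ha hy hay]
  congr 1
  refine sum_congr rfl fun c hc => ?_
  simp only [mem_filter, mem_Ioc] at hc
  rw [sum_eq_single_of_mem a (by simp [hc.1.1.le]) fun u hu hua => ?_, add_sub_cancel_right]
  have hua' : ¬ u ≤ a := fun h => hua (le_antisymm h (mem_Icc.mp hu).1)
  rw [coeff_invTheta_eq_zero_of_massBelow_pos hmob hinvθ hy hc.2 hc.1.2 (p := a)
    (by simp [hv, massBelow_tv, hua']), mul_zero]

theorem eq_or_of_coeff_invTheta_ne_zero (hmob : IsInvOn Set.univ zeta mob)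
    (hinvθ : IsInvOn Q (theta mob) invθ) (hy : y ∈ Q) {w₀ : P} {v : P →₀ ℤ}
    (hv : ∀ p ≤ w₀, v p = 0) (hvm : massBelow w₀ v = 0) {c u : P} (hc : c ∈ Q) (hcy : c ≤ y)
    (huc : u ≤ c) (hne : (invθ c y).coeff (tv w₀ - tv u + v) ≠ 0) :
    u = w₀ ∨ u = c ∧ c < w₀ := by
  have huw : u ≤ w₀ := by
    by_contra huw
    exact hne (coeff_invTheta_eq_zero_of_massBelow_pos hmob hinvθ hy hc hcy (p := w₀)
      (by simp [massBelow_tv, huw, hvm]))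
  rcases huw.eq_or_lt with rfl | huw
  · exact Or.inl rfl
  have hcu : c ≤ u := by
    by_contra hcu
    exact hne (coeff_invTheta_eq_zero_of_apply_ne_zero hmob hinvθ hy hc hcy (p := u)
      (by simp [tv_apply, huw.ne', hv u huw.le]) hcu)
  obtain rfl := le_antisymm huc hcu
  exact Or.inr ⟨rfl, huw⟩

theorem coeff_invTheta_tv_sub_tv_add (hmob : IsInvOn Set.univ zeta mob)
    (hinvθ : IsInvOn Q (theta mob) invθ) (hy : y ∈ Q) {a w₀ : P} (ha : a ∈ Q) (hay : a ≤ y)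
    (haw : a < w₀) {v : P →₀ ℤ} (hv : ∀ p ≤ w₀, v p = 0) (hvm : massBelow w₀ v = 0) :
    (invθ a y).coeff (tv w₀ - tv a + v) = -∑ c ∈ Ioc a y with c ∈ Q,
      ((if w₀ ≤ c then mob w₀ c * (invθ c y).coeff v else 0) +
        (if c < w₀ then (invθ c y).coeff (tv w₀ - tv c + v) else 0)) := by
  have hne : ¬ (a = y ∧ tv w₀ - tv a + v = 0) := fun h => by
    simpa [tv_apply, haw.ne', hv a haw.le] using congrArg (· a) h.2
  have hshift : ∀ u, tv w₀ - tv a + v + tv a - tv u = tv w₀ - tv u + v := fun u => by abel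
  rw [coeff_invTheta hmob hinvθ ha hy hay, if_neg hne, zero_sub]
  congr 1
  refine sum_congr rfl fun c hc => ?_
  simp only [mem_filter, mem_Ioc] at hc
  simp_rw [hshift]
  have hclass := fun u (huc : u ≤ c) hne =>
    eq_or_of_coeff_invTheta_ne_zero hmob hinvθ hy hv hvm hc.2 hc.1.2 huc hne
  by_cases hwc : w₀ ≤ c
  · rw [if_pos hwc, if_neg hwc.not_gt, add_zero,
      sum_eq_single_of_mem w₀ (mem_Icc.mpr ⟨haw.le, hwc⟩) fun u hu huw => ?_, sub_self, zero_add]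
    by_contra hne
    rcases hclass u (mem_Icc.mp hu).2 (right_ne_zero_of_mul hne) with h | h
    · exact huw h
    · exact hwc.not_gt h.2
  · rw [if_neg hwc, zero_add,
      sum_eq_single_of_mem c (mem_Icc.mpr ⟨hc.1.1.le, le_rfl⟩) fun u hu huc => ?_,
      mob_self hmob, one_mul]
    · split_ifs with hcw
      · rfl
      · by_contra hne
        rcases hclass c le_rfl hne with h | h
        · exact hwc h.ge
        · exact hcw h.2
    · by_contra hne
      rcases hclass u (mem_Icc.mp hu).2 (right_ne_zero_of_mul hne) with h | h
      · exact hwc (h ▸ (mem_Icc.mp hu).2)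
      · exact huc h.1

theorem coeff_invTheta_chainExp_of_not_le (hmob : IsInvOn Set.univ zeta mob)
    (hinvθ : IsInvOn Q (theta mob) invθ) (hinvμ : IsInvOn Q mob invμ) (hy : y ∈ Q) {a : P}
    (ha : a ∈ Q) (hay : a ≤ y) {k : ℕ} {z : Fin (k + 1) → P} {w : Fin k → P}
    {mQ : Fin k → P → P → ℚ} (hz : IsReducedChain Q y z w) (hza : ∀ i : Fin k, ¬ z i.castSucc ≤ a)
    (ih : ∀ c ∈ Q, a < c → c ≤ y →
      (invθ c y).coeff (chainExp z w) = invμ c (z 0) * chainWeight Q mob invμ mQ z w) :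
    (invθ a y).coeff (chainExp z w) = invμ a (z 0) * chainWeight Q mob invμ mQ z w := by
  rw [coeff_invTheta_of_massBelow_eq_zero hmob hinvθ hy ha hay
      (massBelow_chainExp_eq_zero hz.le_w hza),
    sum_congr rfl fun c hc => by
      simp only [mem_filter, mem_Ioc] at hc
      rw [ih c hc.2 hc.1.1 hc.1.2, ← mul_assoc],
    ← sum_mul, hinvμ.sum_Ioc_mul_eq ha hay (mob_self hmob a) (hz.mem_of_mem_last hy 0)
      (hz.le_last 0)]
  cases k with
  | zero => simp [chainExp, chainWeight, ← hz.last_eq]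
  | succ k =>
    have hz0a : ¬ z 0 ≤ a := by simpa using hza 0
    have hay' : a ≠ y := fun h => hz0a (h ▸ hz.le_last 0)
    have haz0 : a ≠ z 0 := fun h => hz0a h.ge
    have hv : chainExp z w ≠ 0 := fun h => by simpa [h] using hz.chainExp_apply_zero
    simp [hay', hv, haz0]

theorem coeff_invTheta_chainExp_of_head_eq (hmob : IsInvOn Set.univ zeta mob)
    (hinvθ : IsInvOn Q (theta mob) invθ) (hinvμ : IsInvOn Q mob invμ) (hy : y ∈ Q) {a : P}
    (ha : a ∈ Q) (hay : a ≤ y) {k : ℕ} {z : Fin (k + 2) → P} {w : Fin (k + 1) → P}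
    {mQ : Fin (k + 1) → P → P → ℚ} (hz : IsReducedChain Q y z w)
    (hmQ : ∀ i, IsInvOn (Q ∪ {w i}) zeta (mQ i)) (hza : z 0 = a)
    (ih : ∀ c ∈ Q, a < c → c ≤ y → ∀ (k : ℕ) (z : Fin (k + 1) → P) (w : Fin k → P)
      (mQ : Fin k → P → P → ℚ), IsReducedChain Q y z w →
      (∀ i, IsInvOn (Q ∪ {w i}) zeta (mQ i)) →
      (invθ c y).coeff (chainExp z w) = invμ c (z 0) * chainWeight Q mob invμ mQ z w) :
    (invθ a y).coeff (chainExp z w) = invμ a (z 0) * chainWeight Q mob invμ mQ z w := by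
  set G := gamma Q mob invμ (w 0) (z 1)
  set W := chainWeight Q mob invμ (Fin.tail mQ) (Fin.tail z) (Fin.tail w)
  have haw : a < w 0 := hza ▸ by simpa using hz.lt_w 0
  have hterm : ∀ c ∈ {c ∈ Ioc a y | c ∈ Q},
      ((if w 0 ≤ c then mob (w 0) c * (invθ c y).coeff (chainExp (Fin.tail z) (Fin.tail w))
          else 0) +
        (if c < w 0 then (invθ c y).coeff (tv (w 0) - tv c + chainExp (Fin.tail z) (Fin.tail w))
          else 0)) =
      (if w 0 ≤ c then mob (w 0) c * invμ c (z 1) else 0) * W +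
        (if c < w 0 then mQ 0 c (w 0) else 0) * (G * W) := by
    intro c hc
    simp only [mem_filter, mem_Ioc] at hc
    have ihc := ih c hc.2 hc.1.1 hc.1.2
    congr 1
    · rw [ihc _ _ _ (Fin.tail mQ) hz.tail fun i => hmQ i.succ]
      split_ifs
      · rw [mul_assoc]
        rfl
      · rw [zero_mul]
    · split_ifs with hcw
      · have h10 : (1 : Fin (k + 2)) ≠ 0 := Fin.zero_lt_one.ne'
        have hupd := ihc _ _ _ _ (hz.update_zero hc.2 hcw) hmQ
        rw [chainExp_succ, chainWeight_succ, Fin.tail_update_zero, Function.update_self,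
          Function.update_of_ne h10, hinvμ.apply_self hc.2 (mob_self hmob c), one_mul] at hupd
        rw [hupd, mul_assoc]
      · simp
  rw [chainExp_succ, hza, coeff_invTheta_tv_sub_tv_add hmob hinvθ hy ha hay haw
      (fun p hp => chainExp_apply_eq_zero hz.tail.le_w fun i hi => hz.not_tail_le i (hi.trans hp))
      (massBelow_chainExp_eq_zero hz.tail.le_w hz.not_tail_le),
    sum_congr rfl hterm, sum_add_distrib, ← sum_mul, ← sum_mul,
    sum_Ioc_ite_le_eq_gamma hinvμ haw (hz.le_last 1), (hmQ 0).sum_Ioc_ite_lt_of_zeta ha haw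
      ((hz.w_le 0).trans (hz.le_last _)),
    chainWeight_succ, hza, hinvμ.apply_self ha (mob_self hmob a)]
  ring

theorem coeff_invTheta_chainExp (hmob : IsInvOn Set.univ zeta mob)
    (hinvθ : IsInvOn Q (theta mob) invθ) (hinvμ : IsInvOn Q mob invμ) (hy : y ∈ Q) :
    ∀ a ≤ y, a ∈ Q → ∀ (k : ℕ) (z : Fin (k + 1) → P) (w : Fin k → P)
      (mQ : Fin k → P → P → ℚ), IsReducedChain Q y z w →
      (∀ i, IsInvOn (Q ∪ {w i}) zeta (mQ i)) →
      (invθ a y).coeff (chainExp z w) = invμ a (z 0) * chainWeight Q mob invμ mQ z w := by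
  refine downward_induction_le fun a hay ih ha k z w mQ hz hmQ => ?_
  by_cases haz : a ≤ z 0
  · rcases k with _ | k
    · exact coeff_invTheta_chainExp_of_not_le hmob hinvθ hinvμ hy ha hay hz nofun
        fun c hc hac hcy => ih c hac hcy hc 0 z w mQ hz hmQ
    rcases haz.eq_or_lt with rfl | hlt
    · exact coeff_invTheta_chainExp_of_head_eq hmob hinvθ hinvμ hy ha hay hz hmQ rfl
        fun c hc hac hcy => ih c hac hcy hc
    · exact coeff_invTheta_chainExp_of_not_le hmob hinvθ hinvμ hy ha hay hz
        (fun i hi => hlt.not_ge ((hz.monotone (Fin.zero_le _)).trans hi))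
        fun c hc hac hcy => ih c hac hcy hc _ z w mQ hz hmQ
  · have hk : k ≠ 0 := by
      rintro rfl
      exact haz (hay.trans_eq hz.last_eq.symm)
    obtain ⟨k, rfl⟩ := Nat.exists_eq_succ_of_ne_zero hk
    rw [hinvμ.eq_zero_of_not_le haz, zero_mul]
    exact coeff_invTheta_eq_zero_of_apply_ne_zero hmob hinvθ hy ha hay
      (by simp [hz.chainExp_apply_zero]) haz

end

/-- `z (Fin.last k) = y` plays the role of `z_{k+1}`, and `mQ i` is the Möbius function of
`Q ∪ {w i}`. -/
theorem statement8 [PartialOrder P] [LocallyFiniteOrder P]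
    (Q : Set P) (x y : P) (hxQ : x ∈ Q) (hyQ : y ∈ Q) (hxy : x ≤ y)
    (mob : P → P → ℚ) (hmob : IsInvOn Set.univ zeta mob)
    (invθ : P → P → AP P) (hinvθ : IsInvOn Q (theta mob) invθ)
    (invμ : P → P → ℚ) (hinvμ : IsInvOn Q mob invμ) :
    (invθ x y ∈ Submodule.span ℚ {a : AP P | ∃ (k : ℕ) (z : Fin (k+1) → P) (w : Fin k → P),
        z (Fin.last k) = y ∧
        (∀ i : Fin k, z i.castSucc ∈ Q ∧ x ≤ z i.castSucc ∧ z i.castSucc ≤ y) ∧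
        (∀ i : Fin k, z i.castSucc ≤ w i) ∧ (∀ i : Fin k, w i ≤ z i.succ) ∧
        a = AddMonoidAlgebra.single (∑ i : Fin k, (tv (w i) - tv (z i.castSucc))) 1}) ∧
    (∀ (k : ℕ) (z : Fin (k+1) → P) (w : Fin k → P),
      z (Fin.last k) = y →
      (∀ i : Fin k, z i.castSucc ∈ Q ∧ x ≤ z i.castSucc ∧ z i.castSucc ≤ y) →
      (∀ i : Fin k, z i.castSucc ≤ w i) → (∀ i : Fin k, w i ≤ z i.succ) →
      (∀ (i : Fin k) (j : Fin k), w i ≠ z j.castSucc) →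
      ∀ mQ : Fin k → (P → P → ℚ), (∀ i, IsInvOn (Q ∪ {w i}) zeta (mQ i)) →
        (invθ x y).coeff (∑ i : Fin k, (tv (w i) - tv (z i.castSucc))) =
          invμ x (z 0) *
            ∏ i : Fin k, mQ i (z i.castSucc) (w i) *
              (∑ c ∈ (Finset.Icc (w i) (z i.succ)).filter (· ∈ Q),
                mob (w i) c * invμ c (z i.succ))) := by
  refine ⟨?_, fun k z w hlast hmem hle_w hw_le hw_ne mQ hmQ =>
    coeff_invTheta_chainExp hmob hinvθ hinvμ hyQ x hxy hxQ k z w mQ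
      ⟨⟨hlast, fun i => (hmem i).1, hle_w, hw_le⟩, hw_ne⟩ hmQ⟩
  have hmem := invTheta_mem_supported hmob hinvθ hyQ hxQ hxy
  rw [AddMonoidAlgebra.supported_eq_span_single] at hmem
  refine Submodule.span_mono ?_ hmem
  rintro _ ⟨_, ⟨k, z, w, hchain, hxz, rfl⟩, rfl⟩
  exact ⟨k, z, w, hchain.last_eq, fun i => ⟨hchain.mem i, hxz i, hchain.le_last _⟩,
    hchain.le_w, hchain.w_le, rfl⟩
end

section
/- For every positive integer n, the following identity holds in ℚ(u,v): D_n(u,v) = −( v^{1−n} / ∏_{e ∣ n, e ≠ n} (r_e − 1) ) · Σ_Q (−1)^{#Q} · Inv_Q θ (1, n; u) · ∏_{e ∣ n, e ∉ Q} r_e, where the sum runs over all subsets Q of the set of divisors of n with 1, n ∈ Q, and r_e = u^{n−e} v^{1 − n/e}. -/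
/-!
By Hall's formula, `Inv_Q θ (1, n)` is a signed sum, over the chains
`1 = x₀ ∣ x₁ ∣ ⋯ ∣ x_k = n` of distinct elements of `Q`, of `∏ θ(x_{i-1}, x_i)`.
Exchanging the sums over `Q` and over chains, the sum over all `Q` containing a fixed chain `C`
is an inclusion–exclusion equal to `± ∏_{e ∉ C} (r_e - 1)`. After division by
`∏_{e ≠ n} (r_e - 1)`, a chain contributes `∏ θ(x_{i-1}, x_i) / ∏_{i < k} (r_{x_i} - 1)`.
Summed over the chains from `d` to `n`, these contributions satisfy, via
`θ(d a, d b; u) = θ(a, b; u^d)`, the recursion defining `v^{n/d - 1} D_{n/d}(u^d, v)`.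
-/


open Finset ArithmeticFunction

/-- `θ(d, e; u) = Σ_{d ∣ c ∣ e} μ(e/c) u^(c-d)`, the specialization `t_m = u^m` of the
`θ` polynomial on the divisibility poset of positive integers. -/
noncomputable def thetaDvd {K : Type*} [Field K] (u : K) (d e : ℕ) : K :=
  ∑ c ∈ e.divisors.filter (d ∣ ·), ((moebius (e / c) : ℤ) : K) * u ^ (c - d)

/-- `IsInvOnDvd Q ε η` says that `η` represents the inverse `Inv_Q ε` of the restriction of
`ε` to the finite subposet `Q` of the positive integers ordered by divisibility, in the
incidence algebra of `Q`: `η` is supported on pairs `a ∣ b` with `a, b ∈ Q`, and is a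
two-sided convolution inverse of `ε` on `Q`. -/
noncomputable def IsInvOnDvd {K : Type*} [Field K] (Q : Finset ℕ) (ε η : ℕ → ℕ → K) : Prop :=
  (∀ a b : ℕ, ¬(a ∈ Q ∧ b ∈ Q ∧ a ∣ b) → η a b = 0) ∧
  (∀ a ∈ Q, ∀ b ∈ Q,
    ∑ c ∈ Q.filter (fun c => a ∣ c ∧ c ∣ b), ε a c * η c b = if a = b then 1 else 0) ∧
  (∀ a ∈ Q, ∀ b ∈ Q,
    ∑ c ∈ Q.filter (fun c => a ∣ c ∧ c ∣ b), η a c * ε c b = if a = b then 1 else 0)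

namespace Nat

/-- The lists `a = x₀, x₁, …, x_k = b` with `x_{i-1} ∣ x_i`, `x_{i-1} < x_i` and `x₁, …, x_k ∈ Q`
(see `mem_dvdChains`); the image of `Q.powerset` only serves to make this set finite. -/
def dvdChains (Q : Finset ℕ) (a b : ℕ) : Finset (List ℕ) :=
  (Q.powerset.image fun s => a :: s.sort).filter
    fun l => l.Pairwise (fun x y => x ∣ y ∧ x < y) ∧ l.getLast? = some b

variable {Q : Finset ℕ} {a b : ℕ} {l : List ℕ}

theorem mem_dvdChains : l ∈ dvdChains Q a b ↔ ∃ t, l = a :: t ∧ (∀ x ∈ t, x ∈ Q) ∧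
    (a :: t).Pairwise (fun x y => x ∣ y ∧ x < y) ∧ (a :: t).getLast? = some b := by
  simp only [dvdChains, Finset.mem_filter, Finset.mem_image, Finset.mem_powerset]
  constructor
  · rintro ⟨⟨s, hs, rfl⟩, hl⟩
    exact ⟨_, rfl, fun x hx => hs (Finset.mem_sort _ |>.mp hx), hl⟩
  · rintro ⟨t, rfl, htQ, hl⟩
    have ht : t.Pairwise (· < ·) := (List.pairwise_cons.mp hl.1).2.imp fun h => h.2
    refine ⟨⟨t.toFinset, fun x hx => htQ x (List.mem_toFinset.mp hx), ?_⟩, hl⟩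
    rw [(List.toFinset_sort _ ht.nodup).mpr (ht.imp le_of_lt)]

theorem nodup_of_mem_dvdChains (hl : l ∈ dvdChains Q a b) : l.Nodup := by
  obtain ⟨t, rfl, -, ht, -⟩ := mem_dvdChains.mp hl
  exact ht.imp fun h => h.2.ne

theorem le_of_mem_of_mem_dvdChains (hl : l ∈ dvdChains Q a b) {x : ℕ} (hx : x ∈ l) :
    a ∣ x ∧ a ≤ x := by
  obtain ⟨t, rfl, -, ht, -⟩ := mem_dvdChains.mp hl
  rcases List.mem_cons.mp hx with rfl | hx
  · exact ⟨dvd_rfl, le_rfl⟩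
  · obtain ⟨hdvd, hlt⟩ := List.rel_of_pairwise_cons ht hx
    exact ⟨hdvd, hlt.le⟩

theorem left_mem_of_mem_dvdChains (hl : l ∈ dvdChains Q a b) : a ∈ l := by
  obtain ⟨t, rfl, -⟩ := mem_dvdChains.mp hl
  exact List.mem_cons_self

theorem right_mem_of_mem_dvdChains (hl : l ∈ dvdChains Q a b) : b ∈ l := by
  obtain ⟨t, rfl, -, -, hb⟩ := mem_dvdChains.mp hl
  exact List.mem_of_getLast? hb

theorem mem_of_mem_dvdChains (ha : a ∈ Q) (hl : l ∈ dvdChains Q a b) {x : ℕ} (hx : x ∈ l) :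
    x ∈ Q := by
  obtain ⟨t, rfl, htQ, -⟩ := mem_dvdChains.mp hl
  rcases List.mem_cons.mp hx with rfl | hx
  exacts [ha, htQ x hx]

theorem dvd_of_mem_dvdChains (hl : l ∈ dvdChains Q a b) : a ∣ b :=
  (le_of_mem_of_mem_dvdChains hl (right_mem_of_mem_dvdChains hl)).1

theorem dvdChains_self : dvdChains Q a a = {[a]} := by
  ext l
  rw [mem_dvdChains, Finset.mem_singleton]
  constructor
  · rintro ⟨t, rfl, -, ht, hlast⟩
    rcases t with _ | ⟨x, t⟩
    · rfl
    · rw [List.getLast?_cons_cons] at hlast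
      exact absurd (List.rel_of_pairwise_cons ht (List.mem_of_getLast? hlast)).2 (lt_irrefl a)
  · rintro rfl
    exact ⟨[], rfl, by simp, by simp, rfl⟩

theorem dvdChains_of_ne (hab : a ≠ b) :
    dvdChains Q a b = (Q.filter fun c => a ∣ c ∧ c ∣ b ∧ a < c).biUnion
      fun c => (dvdChains Q c b).image (a :: ·) := by
  ext l
  simp only [Finset.mem_biUnion, Finset.mem_image, Finset.mem_filter]
  constructor
  · intro hl
    obtain ⟨t, rfl, htQ, ht, hlast⟩ := mem_dvdChains.mp hl
    obtain ⟨c, t, rfl⟩ : ∃ c t', t = c :: t' := by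
      rcases t with _ | ⟨c, t⟩
      · exact absurd (Option.some_inj.mp hlast) hab
      · exact ⟨c, t, rfl⟩
    have hc : c :: t ∈ dvdChains Q c b :=
      mem_dvdChains.mpr ⟨t, rfl, fun x hx => htQ x (.tail _ hx), (List.pairwise_cons.mp ht).2,
        by simpa using hlast⟩
    obtain ⟨hac, hlt⟩ := List.rel_of_pairwise_cons ht List.mem_cons_self
    exact ⟨c, ⟨htQ c List.mem_cons_self, hac, dvd_of_mem_dvdChains hc, hlt⟩, _, hc, rfl⟩
  · rintro ⟨c, ⟨hcQ, hac, -, hlt⟩, l, hl, rfl⟩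
    obtain ⟨t, rfl, htQ, ht, hlast⟩ := mem_dvdChains.mp hl
    refine mem_dvdChains.mpr
      ⟨c :: t, rfl, ?_, List.pairwise_cons.mpr ⟨?_, ht⟩, by simpa using hlast⟩
    · rintro x (_ | ⟨_, hx⟩)
      exacts [hcQ, htQ x hx]
    · intro x hx
      obtain ⟨hcx, hcle⟩ := le_of_mem_of_mem_dvdChains hl hx
      exact ⟨hac.trans hcx, hlt.trans_le hcle⟩

theorem sum_dvdChains_of_ne {M : Type*} [AddCommMonoid M] (hab : a ≠ b) (F : List ℕ → M) :
    ∑ l ∈ dvdChains Q a b, F l =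
      ∑ c ∈ Q.filter (fun c => a ∣ c ∧ c ∣ b ∧ a < c), ∑ l ∈ dvdChains Q c b, F (a :: l) := by
  rw [dvdChains_of_ne hab, Finset.sum_biUnion]
  · exact Finset.sum_congr rfl fun c _ => Finset.sum_image fun _ _ _ _ h => List.cons_injective h
  · intro c _ c' _ hcc'
    simp only [Function.onFun, Finset.disjoint_left, Finset.mem_image]
    rintro _ ⟨l, hl, rfl⟩ ⟨l', hl', hll'⟩
    obtain ⟨t, rfl, -⟩ := mem_dvdChains.mp hl
    obtain ⟨t', rfl, -⟩ := mem_dvdChains.mp hl'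
    exact hcc' (List.cons.inj (List.cons_injective hll')).1.symm

theorem dvdChains_eq_filter {D : Finset ℕ} (hQD : Q ⊆ D) (ha : a ∈ Q) :
    dvdChains Q a b = (dvdChains D a b).filter fun l => l.toFinset ⊆ Q := by
  ext l
  simp only [Finset.mem_filter, mem_dvdChains]
  constructor
  · rintro ⟨t, rfl, htQ, ht⟩
    refine ⟨⟨t, rfl, fun x hx => hQD (htQ x hx), ht⟩, ?_⟩
    intro x hx
    rcases List.mem_cons.mp (List.mem_toFinset.mp hx) with rfl | hx
    exacts [ha, htQ x hx]
  · rintro ⟨⟨t, rfl, -, ht⟩, hsub⟩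
    exact ⟨t, rfl, fun x hx => hsub (List.mem_toFinset.mpr (.tail _ hx)), ht⟩

end Nat

section EdgeProd

variable {M : Type*} [Monoid M]

def edgeProd (ε : ℕ → ℕ → M) : List ℕ → M
  | [] => 1
  | [_] => 1
  | a :: b :: l => ε a b * edgeProd ε (b :: l)

@[simp] theorem edgeProd_singleton (ε : ℕ → ℕ → M) (a : ℕ) : edgeProd ε [a] = 1 := rfl

@[simp] theorem edgeProd_cons_cons (ε : ℕ → ℕ → M) (a b : ℕ) (l : List ℕ) :
    edgeProd ε (a :: b :: l) = ε a b * edgeProd ε (b :: l) := rfl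

end EdgeProd

section IsInvOnDvd

variable {K : Type*} [Field K] {Q : Finset ℕ} {ε η : ℕ → ℕ → K}

theorem IsInvOnDvd.apply_self (hε : ∀ a ∈ Q, ε a a = 1) (h : IsInvOnDvd Q ε η) {a : ℕ}
    (ha : a ∈ Q) : η a a = 1 := by
  have hrow := h.2.1 a ha a ha
  rwa [show Q.filter (fun c => a ∣ c ∧ c ∣ a) = {a} by
      ext c
      simp only [mem_filter, mem_singleton]
      exact ⟨fun ⟨_, hac, hca⟩ => Nat.dvd_antisymm hca hac,
        by rintro rfl; exact ⟨ha, dvd_rfl, dvd_rfl⟩⟩,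
    sum_singleton, hε a ha, one_mul, if_pos rfl] at hrow

theorem IsInvOnDvd.eq_neg_sum (hQ : 0 ∉ Q) (hε : ∀ a ∈ Q, ε a a = 1) (h : IsInvOnDvd Q ε η)
    {a b : ℕ} (ha : a ∈ Q) (hb : b ∈ Q) (hab : a ≠ b) :
    η a b = -∑ c ∈ Q.filter (fun c => a ∣ c ∧ c ∣ b ∧ a < c), ε a c * η c b := by
  by_cases hdvd : a ∣ b
  swap
  · rw [h.1 a b fun h' => hdvd h'.2.2,
      filter_false_of_mem fun c _ ⟨hac, hcb, _⟩ => hdvd (hac.trans hcb), sum_empty, neg_zero]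
  have herase : (Q.filter fun c => a ∣ c ∧ c ∣ b).erase a =
      Q.filter fun c => a ∣ c ∧ c ∣ b ∧ a < c := by
    ext c
    simp only [mem_erase, mem_filter]
    constructor
    · rintro ⟨hca, hcQ, hac, hcb⟩
      have hc : 0 < c := Nat.pos_of_ne_zero (ne_of_mem_of_not_mem hcQ hQ)
      exact ⟨hcQ, hac, hcb, (Nat.le_of_dvd hc hac).lt_of_ne' hca⟩
    · rintro ⟨hcQ, hac, hcb, hlt⟩
      exact ⟨hlt.ne', hcQ, hac, hcb⟩
  have hrow := h.2.1 a ha b hb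
  rw [← add_sum_erase _ _ (mem_filter.mpr ⟨ha, dvd_rfl, hdvd⟩), hε a ha, one_mul, herase,
    if_neg hab] at hrow
  exact eq_neg_of_add_eq_zero_left hrow

open Nat in
/-- Hall's formula for the inverse of a unitriangular element of the incidence algebra. -/
theorem IsInvOnDvd.eq_sum_dvdChains (hQ : 0 ∉ Q) (hε : ∀ a ∈ Q, ε a a = 1)
    (h : IsInvOnDvd Q ε η) {a b : ℕ} (ha : a ∈ Q) (hb : b ∈ Q) :
    η a b = ∑ l ∈ dvdChains Q a b, (-1) ^ (l.length - 1) * edgeProd ε l := by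
  induction hk : b - a using Nat.strong_induction_on generalizing a with
  | _ k ih =>
  rcases eq_or_ne a b with rfl | hab
  · simp [h.apply_self hε ha, dvdChains_self]
  rw [h.eq_neg_sum hQ hε ha hb hab, sum_dvdChains_of_ne hab, ← sum_neg_distrib]
  refine sum_congr rfl fun c hc => ?_
  obtain ⟨hcQ, -, hcb, hlt⟩ := mem_filter.mp hc
  have hcb' : c ≤ b := Nat.le_of_dvd (Nat.pos_of_ne_zero (ne_of_mem_of_not_mem hb hQ)) hcb
  rw [ih (b - c) (by omega) hcQ rfl, mul_sum, ← sum_neg_distrib]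
  refine sum_congr rfl fun l hl => ?_
  obtain ⟨t, rfl, -⟩ := mem_dvdChains.mp hl
  simp only [edgeProd_cons_cons, List.length_cons, Nat.add_sub_cancel, pow_succ]
  ring

end IsInvOnDvd

theorem Finset.sum_Icc_neg_one_pow_card_mul_prod_sdiff {α R : Type*} [DecidableEq α] [CommRing R]
    {C D : Finset α} (hCD : C ⊆ D) (r : α → R) :
    ∑ Q ∈ Icc C D, (-1) ^ #Q * ∏ e ∈ D \ Q, r e = (-1) ^ #C * ∏ e ∈ D \ C, (r e - 1) := by
  have hdisj : ∀ t ∈ (D \ C).powerset, Disjoint C t := fun t ht =>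
    disjoint_of_subset_right (mem_powerset.mp ht) disjoint_sdiff
  rw [Icc_eq_image_powerset hCD, sum_image fun t ht t' ht' h => by
      rw [← union_sdiff_cancel_left (hdisj t ht), ← union_sdiff_cancel_left (hdisj t' ht')]
      exact congrArg (· \ C) h,
    prod_sub, mul_sum]
  refine sum_congr rfl fun t ht => ?_
  rw [card_union_of_disjoint (hdisj t ht), pow_add, prod_const_one, mul_one, sdiff_sdiff_left',
    sdiff_union_distrib]
  ring

open Nat in
theorem sum_powerset_inv_eq_neg_sum_dvdChains {K : Type*} [Field K] {D : Finset ℕ} (hD : 0 ∉ D)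
    {ε : ℕ → ℕ → K} (hε : ∀ a ∈ D, ε a a = 1) {a b : ℕ} (ha : a ∈ D)
    {η : Finset ℕ → ℕ → ℕ → K}
    (hη : ∀ Q ∈ D.powerset.filter (fun Q => a ∈ Q ∧ b ∈ Q), IsInvOnDvd Q ε (η Q)) (r : ℕ → K) :
    ∑ Q ∈ D.powerset.filter (fun Q => a ∈ Q ∧ b ∈ Q), (-1) ^ #Q * η Q a b * ∏ e ∈ D \ Q, r e =
      -∑ l ∈ dvdChains D a b, edgeProd ε l * ∏ e ∈ D \ l.toFinset, (r e - 1) := by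
  calc _ = ∑ Q ∈ D.powerset.filter (fun Q => a ∈ Q ∧ b ∈ Q), ∑ l ∈ dvdChains D a b,
        if l.toFinset ⊆ Q then (-1) ^ (l.length - 1) * edgeProd ε l *
          ((-1) ^ #Q * ∏ e ∈ D \ Q, r e) else 0 := by
        refine sum_congr rfl fun Q hQ => ?_
        obtain ⟨hQD, haQ, hbQ⟩ := by simpa only [mem_filter, mem_powerset] using hQ
        rw [(hη Q hQ).eq_sum_dvdChains (fun h0 => hD (hQD h0)) (fun c hc => hε c (hQD hc)) haQ hbQ,
          dvdChains_eq_filter hQD haQ, sum_filter, mul_sum, sum_mul]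
        exact sum_congr rfl fun l _ => by split_ifs <;> ring
    _ = ∑ l ∈ dvdChains D a b, (-1) ^ (l.length - 1) * edgeProd ε l *
          ∑ Q ∈ Icc l.toFinset D, (-1) ^ #Q * ∏ e ∈ D \ Q, r e := by
        rw [sum_comm]
        refine sum_congr rfl fun l hl => ?_
        rw [← sum_filter, mul_sum, filter_filter]
        congr 1
        ext Q
        have haC := List.mem_toFinset.mpr (left_mem_of_mem_dvdChains hl)
        have hbC := List.mem_toFinset.mpr (right_mem_of_mem_dvdChains hl)
        simp only [mem_filter, mem_powerset, mem_Icc]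
        exact ⟨fun h => ⟨h.2.2, h.1⟩, fun h => ⟨h.2, ⟨h.1 haC, h.1 hbC⟩, h.1⟩⟩
    _ = _ := by
        rw [← sum_neg_distrib]
        refine sum_congr rfl fun l hl => ?_
        rw [sum_Icc_neg_one_pow_card_mul_prod_sdiff
            fun x hx => mem_of_mem_dvdChains ha hl (List.mem_toFinset.mp hx),
          List.toFinset_card_of_nodup (nodup_of_mem_dvdChains hl)]
        obtain ⟨t, rfl, -⟩ := mem_dvdChains.mp hl
        have hsign : ((-1 : K) ^ t.length) * (-1) ^ t.length = 1 := by
          rw [← mul_pow]; simp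
        simp only [List.length_cons, Nat.add_sub_cancel, pow_succ]
        linear_combination (-(edgeProd ε (a :: t) * ∏ e ∈ D \ (a :: t).toFinset, (r e - 1))) * hsign

section Dfun

variable {K : Type*} [Field K]

theorem thetaDvd_self (u : K) {a : ℕ} (ha : 0 < a) : thetaDvd u a a = 1 := by
  have : a.divisors.filter (a ∣ ·) = {a} := by
    ext c
    simp only [mem_filter, Nat.mem_divisors, mem_singleton]
    exact ⟨fun ⟨⟨hca, _⟩, hac⟩ => Nat.dvd_antisymm hca hac,
      by rintro rfl; exact ⟨⟨dvd_rfl, ha.ne'⟩, dvd_rfl⟩⟩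
  simp [thetaDvd, this, Nat.div_self ha]

theorem thetaDvd_mul_mul (u : K) {d : ℕ} (hd : 0 < d) (a b : ℕ) :
    thetaDvd u (d * a) (d * b) = thetaDvd (u ^ d) a b := by
  have hset : (d * b).divisors.filter (d * a ∣ ·) = (b.divisors.filter (a ∣ ·)).image (d * ·) := by
    ext c
    simp only [mem_filter, Nat.mem_divisors, mem_image]
    constructor
    · rintro ⟨⟨hcb, hb⟩, hac⟩
      obtain ⟨c, rfl⟩ := (Dvd.intro a rfl).trans hac
      exact ⟨c, ⟨⟨Nat.dvd_of_mul_dvd_mul_left hd hcb, right_ne_zero_of_mul hb⟩,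
        Nat.dvd_of_mul_dvd_mul_left hd hac⟩, rfl⟩
    · rintro ⟨c, ⟨⟨hcb, hb⟩, hac⟩, rfl⟩
      exact ⟨⟨mul_dvd_mul_left d hcb, mul_ne_zero hd.ne' hb⟩, mul_dvd_mul_left d hac⟩
  rw [thetaDvd, thetaDvd, hset, sum_image fun x _ y _ h => Nat.eq_of_mul_eq_mul_left hd h]
  refine sum_congr rfl fun c _ => ?_
  rw [Nat.mul_div_mul_left _ _ hd, ← Nat.mul_sub, pow_mul]

theorem Dfun_of_two_le {m : ℕ} (hm : 2 ≤ m) (u v : K) :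
    Dfun m u v = (u ^ (m - 1) - v ^ (m - 1))⁻¹ *
      ∑ k ∈ m.divisors.erase 1, v ^ (m / k - 1) * thetaDvd u 1 k * Dfun (m / k) (u ^ k) v := by
  obtain ⟨j, rfl⟩ : ∃ j, m = j + 2 := ⟨m - 2, by omega⟩
  rw [Dfun, ← sum_attach ((j + 2).divisors.erase 1)]
  simp [thetaDvd]

def rFactor (n : ℕ) (u v : K) (e : ℕ) : K := u ^ (n - e) * v ^ ((1 : ℤ) - ((n / e : ℕ) : ℤ))

theorem rFactor_mul_sub_one_inv (u : K) {v : K} (hv : v ≠ 0) {d m : ℕ} (hd : 0 < d) (hm : 0 < m) :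
    (rFactor (d * m) u v d - 1)⁻¹ = v ^ (m - 1) * ((u ^ d) ^ (m - 1) - v ^ (m - 1))⁻¹ := by
  obtain ⟨k, rfl⟩ : ∃ k, m = k + 1 := ⟨m - 1, by omega⟩
  have hvk : v ^ k ≠ 0 := pow_ne_zero k hv
  have hexp : d * (k + 1) - d = d * k := by rw [Nat.mul_succ]; omega
  rw [rFactor, Nat.mul_div_cancel_left _ hd, hexp, Nat.add_sub_cancel, pow_mul, Nat.cast_add, Nat.cast_one, sub_add_cancel_right, zpow_neg,
    zpow_natCast, ← div_eq_mul_inv, div_sub_one hvk, inv_div, div_eq_mul_inv]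

theorem Nat.filter_divisors_mul_eq_image_mul {d m : ℕ} (hd : 0 < d) (hm : 0 < m) :
    (d * m).divisors.filter (fun c => d ∣ c ∧ c ∣ d * m ∧ d < c) =
      (m.divisors.erase 1).image (d * ·) := by
  ext c
  simp only [mem_filter, Nat.mem_divisors, mem_image, mem_erase]
  constructor
  · rintro ⟨-, ⟨k, rfl⟩, hkm, hlt⟩
    exact ⟨k, ⟨fun hk => by simp [hk] at hlt, Nat.dvd_of_mul_dvd_mul_left hd hkm, hm.ne'⟩, rfl⟩
  · rintro ⟨k, ⟨hk1, hkm, -⟩, rfl⟩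
    have hk : 0 < k := Nat.pos_of_dvd_of_pos hkm hm
    exact ⟨⟨mul_dvd_mul_left d hkm, mul_ne_zero hd.ne' hm.ne'⟩, dvd_mul_right d k,
      mul_dvd_mul_left d hkm, lt_mul_of_one_lt_right hd (by omega)⟩

open Nat in
theorem sum_dvdChains_edgeProd_thetaDvd_eq_Dfun {n : ℕ} (hn : 0 < n) (u : K) {v : K}
    (hv : v ≠ 0) {d : ℕ} (hd : d ∣ n) :
    ∑ l ∈ dvdChains n.divisors d n,
        edgeProd (thetaDvd u) l * ∏ e ∈ l.toFinset.erase n, (rFactor n u v e - 1)⁻¹ =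
      v ^ (n / d - 1) * Dfun (n / d) (u ^ d) v := by
  induction hk : n - d using Nat.strong_induction_on generalizing d with
  | _ k ih =>
  have hd0 : 0 < d := Nat.pos_of_dvd_of_pos hd hn
  rcases eq_or_ne d n with rfl | hne
  · simp [dvdChains_self, Nat.div_self hn, Dfun]
  have hterm : ∀ c ∈ n.divisors.filter (fun c => d ∣ c ∧ c ∣ n ∧ d < c),
      ∑ l ∈ dvdChains n.divisors c n, edgeProd (thetaDvd u) (d :: l) *
          ∏ e ∈ (d :: l).toFinset.erase n, (rFactor n u v e - 1)⁻¹ =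
        (rFactor n u v d - 1)⁻¹ *
          (thetaDvd u d c * (v ^ (n / c - 1) * Dfun (n / c) (u ^ c) v)) := by
    intro c hc
    obtain ⟨-, -, hcn, hlt⟩ := mem_filter.mp hc
    rw [← ih (n - c) (by have := Nat.le_of_dvd hn hcn; omega) hcn rfl, mul_sum, mul_sum]
    refine sum_congr rfl fun l hl => ?_
    have hdl : d ∉ l.toFinset.erase n := fun h =>
      (le_of_mem_of_mem_dvdChains hl (List.mem_toFinset.mp (mem_of_mem_erase h))).2.not_gt hlt
    obtain ⟨t, rfl, -⟩ := mem_dvdChains.mp hl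
    rw [List.toFinset_cons, erase_insert_of_ne hne, prod_insert hdl, edgeProd_cons_cons]
    ring
  obtain ⟨m, rfl⟩ := hd
  have hm : 0 < m := Nat.pos_of_mul_pos_left hn
  have hm2 : 2 ≤ m := by
    have : m ≠ 1 := by rintro rfl; exact hne (mul_one d).symm
    omega
  rw [sum_dvdChains_of_ne hne, sum_congr rfl hterm, ← mul_sum, rFactor_mul_sub_one_inv u hv hd0 hm,
    Nat.mul_div_cancel_left _ hd0, Dfun_of_two_le hm2, mul_assoc,
    Nat.filter_divisors_mul_eq_image_mul hd0 hm,
    sum_image fun x _ y _ h => Nat.eq_of_mul_eq_mul_left hd0 h]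
  congr 2
  refine sum_congr rfl fun k _ => ?_
  rw [Nat.mul_div_mul_left _ _ hd0, ← thetaDvd_mul_mul u hd0, mul_one, pow_mul]
  ring

end Dfun

theorem Finset.prod_sdiff_eq_prod_erase_mul_prod_inv {α K : Type*} [DecidableEq α] [Field K]
    {C D : Finset α} {b : α} (hCD : C ⊆ D) (hb : b ∈ C) {f : α → K}
    (hf : ∀ e ∈ D.erase b, f e ≠ 0) :
    ∏ e ∈ D \ C, f e = (∏ e ∈ D.erase b, f e) * ∏ e ∈ C.erase b, (f e)⁻¹ := by
  have hsub : C.erase b ⊆ D.erase b := erase_subset_erase b hCD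
  have hsdiff : D \ C = D.erase b \ C.erase b := by
    ext x
    simp only [mem_sdiff, mem_erase]
    exact ⟨fun ⟨hxD, hxC⟩ => ⟨⟨fun h => hxC (h ▸ hb), hxD⟩, fun h => hxC h.2⟩,
      fun ⟨⟨hxb, hxD⟩, hxC⟩ => ⟨hxD, fun h => hxC ⟨hxb, h⟩⟩⟩
  rw [prod_inv_distrib, ← prod_sdiff hsub, hsdiff,
    mul_inv_cancel_right₀ (prod_ne_zero_iff.mpr fun e he => hf e (hsub he))]

section RationalFunctions

open MvPolynomial

local notation "φ" => algebraMap (MvPolynomial (Fin 2) ℚ) (FractionRing (MvPolynomial (Fin 2) ℚ))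

theorem algebraMap_X_ne_zero (i : Fin 2) : φ (X i) ≠ 0 :=
  (map_ne_zero_iff _ (IsFractionRing.injective _ _)).mpr (X_ne_zero i)

theorem algebraMap_X_pow_mul_zpow_ne_one {i : ℕ} (hi : i ≠ 0) (k : ℕ) :
    φ (X 0) ^ i * φ (X 1) ^ ((1 : ℤ) - k) ≠ 1 := by
  intro h
  have hpoly : (X 0 ^ i * X 1 : MvPolynomial (Fin 2) ℚ) = X 1 ^ k := by
    apply IsFractionRing.injective (MvPolynomial (Fin 2) ℚ) (FractionRing (MvPolynomial (Fin 2) ℚ))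
    rw [map_mul, map_pow, map_pow, ← zpow_natCast (φ (X 1)), ← one_mul (φ (X 1) ^ (k : ℤ)), ← h,
      mul_assoc, ← zpow_add₀ (algebraMap_X_ne_zero 1), sub_add_cancel, zpow_one]
  simpa [hi] using congrArg (eval (![0, 1] : Fin 2 → ℚ)) hpoly

theorem rFactor_algebraMap_X_sub_one_ne_zero {n e : ℕ} (he : e ∈ n.divisors.erase n) :
    rFactor n (φ (X 0)) (φ (X 1)) e - 1 ≠ 0 := by
  obtain ⟨hen, hen'⟩ := mem_erase.mp he
  have : e < n := (Nat.divisor_le hen').lt_of_ne hen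
  exact sub_ne_zero.mpr (algebraMap_X_pow_mul_zpow_ne_one (by omega) _)

end RationalFunctions

/-- in `ℚ(u,v)` (the fraction field of `ℚ[u,v]`), for every `n ≥ 1`,
`D_n(u,v) = -(v^{1-n} / Π_{e ∣ n, e ≠ n} (r_e - 1)) ·
  Σ_{1, n ∈ Q ⊆ divisors n} (-1)^{#Q} · Inv_Q θ(1, n; u) · Π_{e ∣ n, e ∉ Q} r_e`,
where `r_e = u^{n-e} v^{1 - n/e}` and `Inv_Q θ` (represented by `η Q`) is the inverse of
the restriction of `θ(·,·;u)` to `Q` in the incidence algebra of the divisibility poset. -/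
theorem statement11 (n : ℕ) (hn : 0 < n) :
    letI Quv := FractionRing (MvPolynomial (Fin 2) ℚ)
    ∀ (u v : Quv),
      u = algebraMap (MvPolynomial (Fin 2) ℚ) Quv (MvPolynomial.X 0) →
      v = algebraMap (MvPolynomial (Fin 2) ℚ) Quv (MvPolynomial.X 1) →
      ∀ r : ℕ → Quv, (∀ e : ℕ, r e = u ^ (n - e) * v ^ ((1 : ℤ) - ((n / e : ℕ) : ℤ))) →
      ∀ η : Finset ℕ → ℕ → ℕ → Quv,
        (∀ Q ∈ n.divisors.powerset.filter (fun Q => 1 ∈ Q ∧ n ∈ Q),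
          IsInvOnDvd Q (thetaDvd u) (η Q)) →
      Dfun n u v =
        - (v ^ ((1 : ℤ) - (n : ℤ)) / ∏ e ∈ n.divisors.erase n, (r e - 1)) *
          ∑ Q ∈ n.divisors.powerset.filter (fun Q => 1 ∈ Q ∧ n ∈ Q),
            (-1 : Quv) ^ Q.card * η Q 1 n * ∏ e ∈ n.divisors \ Q, r e := by
  intro u v hu hv r hr η hη
  obtain rfl : r = rFactor n u v := funext hr
  have hv0 : v ≠ 0 := hv ▸ algebraMap_X_ne_zero 1
  have hr1 : ∀ e ∈ n.divisors.erase n, rFactor n u v e - 1 ≠ 0 := fun e he =>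
    hu ▸ hv ▸ rFactor_algebraMap_X_sub_one_ne_zero he
  have hD : 0 ∉ n.divisors := fun h => (Nat.pos_of_mem_divisors h).ne' rfl
  have hchain : ∀ l ∈ Nat.dvdChains n.divisors 1 n,
      edgeProd (thetaDvd u) l * ∏ e ∈ n.divisors \ l.toFinset, (rFactor n u v e - 1) =
        (∏ e ∈ n.divisors.erase n, (rFactor n u v e - 1)) * (edgeProd (thetaDvd u) l *
          ∏ e ∈ l.toFinset.erase n, (rFactor n u v e - 1)⁻¹) := fun l hl => by
    rw [prod_sdiff_eq_prod_erase_mul_prod_inv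
      (fun x hx => Nat.mem_of_mem_dvdChains (Nat.one_mem_divisors.mpr hn.ne') hl
        (List.mem_toFinset.mp hx))
      (List.mem_toFinset.mpr (Nat.right_mem_of_mem_dvdChains hl)) hr1, mul_left_comm]
  rw [sum_powerset_inv_eq_neg_sum_dvdChains hD
      (fun a ha => thetaDvd_self u (Nat.pos_of_mem_divisors ha))
      (Nat.one_mem_divisors.mpr hn.ne') hη, sum_congr rfl hchain, ← mul_sum,
    sum_dvdChains_edgeProd_thetaDvd_eq_Dfun hn u hv0 (one_dvd n), Nat.div_one, pow_one,
    neg_mul_neg, ← mul_assoc, div_mul_cancel₀ _ (prod_ne_zero_iff.mpr hr1), ← mul_assoc,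
    ← zpow_natCast, ← zpow_add₀ hv0, Nat.cast_sub hn, Nat.cast_one, sub_add_sub_cancel', sub_self,
    zpow_zero, one_mul]
end
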